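/- arXiv:2401.15522 — 14 statements merged into one kernel-verified Lean document; each statement's English description precedes it below -/
import Mathlib

section
/- Fix reals ν > 0, T > 0 and d > 0, and set σ = √(d² + 1/ν), a = σ·T/2, N = σ·cosh(2a) + d·sinh(2a), and E = N / ((σ·sinh a + d·cosh a)·(σ·cosh a + d·sinh a)). Then E = (2·d·tanh a + σ·(1 + (tanh a)²)) / ((σ² + d²)·tanh a + d·σ·(1 + (tanh a)²)) and E < 1/d. -/
open Real

/-- Symmetric special case (γ = 0, α = T/2) of algorithm NN₁ₐ: the common
interface quantity `E` satisfies the explicit tanh-formula and `E < 1/d`. -/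
theorem stmt3 (ν T d : ℝ) (hν : 0 < ν) (hT : 0 < T) (hd : 0 < d)
    (σ a N E : ℝ)
    (hσ : σ = Real.sqrt (d ^ 2 + 1 / ν)) (ha : a = σ * T / 2)
    (hN : N = σ * Real.cosh (2 * a) + d * Real.sinh (2 * a))
    (hE : E = N / ((σ * Real.sinh a + d * Real.cosh a) * (σ * Real.cosh a + d * Real.sinh a))) :
    E = (2 * d * Real.tanh a + σ * (1 + Real.tanh a ^ 2)) /
        ((σ ^ 2 + d ^ 2) * Real.tanh a + d * σ * (1 + Real.tanh a ^ 2)) ∧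
    E < 1 / d := by
  have hσsq : σ ^ 2 = d ^ 2 + 1 / ν := by
    rw [hσ]; exact Real.sq_sqrt (by positivity)
  have hσpos : 0 < σ := by
    rw [hσ]; exact Real.sqrt_pos.mpr (by positivity)
  have hapos : 0 < a := by rw [ha]; positivity
  have hs : 0 < Real.sinh a := Real.sinh_pos_iff.mpr hapos
  have hc : 0 < Real.cosh a := Real.cosh_pos a
  have hcs : Real.cosh a ^ 2 - Real.sinh a ^ 2 = 1 := Real.cosh_sq_sub_sinh_sq a
  have hd1 : 0 < σ * Real.sinh a + d * Real.cosh a := by positivity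
  have hd2 : 0 < σ * Real.cosh a + d * Real.sinh a := by positivity
  have hσd : d ^ 2 < σ ^ 2 := by
    rw [hσsq]; nlinarith [one_div_pos.mpr hν]
  constructor
  · rw [hE, hN, Real.cosh_two_mul, Real.sinh_two_mul, Real.tanh_eq_sinh_div_cosh]
    rw [div_eq_div_iff (by positivity) (by positivity)]
    field_simp
    nlinarith [hcs, sq_nonneg (Real.sinh a), sq_nonneg (Real.cosh a), mul_pos hs hc]
  · rw [hE, hN, Real.cosh_two_mul, Real.sinh_two_mul]
    rw [div_lt_div_iff₀ (mul_pos hd1 hd2) hd]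
    nlinarith [mul_pos hs hc, mul_pos (mul_pos hs hc) (sub_pos.mpr hσd)]
end

section
/- Fix reals ν > 0, T > 0, d > 0 and θ with 0 < θ, and set σ = √(d² + 1/ν), a = σ·T/2, N = σ·cosh(2a) + d·sinh(2a), and E = N / ((σ·sinh a + d·cosh a)·(σ·cosh a + d·sinh a)). Then every eigenvalue μ ∈ spectrum ℂ of the complexification of the 2×2 real matrix [[1 − θ·d·E, θ·ν⁻¹·E], [−θ·E, 1 − θ·d·E]] satisfies ‖μ‖² = 1 − 2·θ·d·E + θ²·σ²·E², and moreover 1 − 2·θ·d·E + θ²·σ²·E² > 1 − 2·θ. -/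
open Real

set_option maxHeartbeats 1000000 in
/-- Spectral radius of the NN₁ₐ iteration matrix in the symmetric case
γ = 0, α = T/2, θ₁ = θ₂ = θ: every complex eigenvalue μ satisfies
`‖μ‖² = 1 − 2θdE + θ²σ²E²`, and this quantity exceeds `1 − 2θ`. -/
theorem stmt4 (ν T d θ : ℝ) (hν : 0 < ν) (hT : 0 < T) (hd : 0 < d) (hθ : 0 < θ)
    (σ a N E : ℝ)
    (hσ : σ = Real.sqrt (d ^ 2 + 1 / ν)) (ha : a = σ * T / 2)
    (hN : N = σ * Real.cosh (2 * a) + d * Real.sinh (2 * a))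
    (hE : E = N / ((σ * Real.sinh a + d * Real.cosh a) * (σ * Real.cosh a + d * Real.sinh a))) :
    (∀ μ ∈ spectrum ℂ
        ((!![1 - θ * d * E, θ * ν⁻¹ * E; -(θ * E), 1 - θ * d * E]).map
          (Complex.ofReal ·)),
      ‖μ‖ ^ 2 = 1 - 2 * θ * d * E + θ ^ 2 * σ ^ 2 * E ^ 2) ∧
    1 - 2 * θ * d * E + θ ^ 2 * σ ^ 2 * E ^ 2 > 1 - 2 * θ := by
  have hν' : (0:ℝ) < 1 / ν := by positivity
  have hσpos : 0 < σ := by rw [hσ]; positivity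
  have hσsq : σ ^ 2 = d ^ 2 + 1 / ν := by
    rw [hσ]; exact Real.sq_sqrt (by positivity)
  have hapos : 0 < a := by rw [ha]; positivity
  have hs : 0 < Real.sinh a := Real.sinh_pos_iff.mpr hapos
  have hc : 0 < Real.cosh a := Real.cosh_pos a
  have hs2 : 0 < Real.sinh (2 * a) := Real.sinh_pos_iff.mpr (by linarith)
  have hc2 : 0 < Real.cosh (2 * a) := Real.cosh_pos _
  have hNpos : 0 < N := by rw [hN]; positivity
  have hD : 0 < (σ * Real.sinh a + d * Real.cosh a) * (σ * Real.cosh a + d * Real.sinh a) := by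
    positivity
  have hEpos : 0 < E := by rw [hE]; positivity
  have hid : Real.cosh a ^ 2 - Real.sinh a ^ 2 = 1 := Real.cosh_sq_sub_sinh_sq a
  have hexp : (σ * Real.sinh a + d * Real.cosh a) * (σ * Real.cosh a + d * Real.sinh a) - d * N
      = (1 / ν) * (Real.sinh a * Real.cosh a) := by
    rw [hN, Real.sinh_two_mul, Real.cosh_two_mul]
    linear_combination (Real.sinh a * Real.cosh a) * hσsq
  have h1 : 0 < (1 / ν) * (Real.sinh a * Real.cosh a) := by positivity
  have hdE : d * E < 1 := by
    rw [hE, ← mul_div_assoc, div_lt_one hD]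
    linarith
  constructor
  · intro μ hμ
    rw [spectrum.mem_iff, Matrix.isUnit_iff_isUnit_det, isUnit_iff_ne_zero, not_not,
      Matrix.det_fin_two] at hμ
    simp only [Algebra.algebraMap_eq_smul_one, Matrix.sub_apply, Matrix.smul_apply,
      Matrix.map_apply, Matrix.one_apply, Matrix.cons_val', Matrix.cons_val_zero,
      Matrix.cons_val_one, Matrix.head_cons, Matrix.empty_val', Matrix.cons_val_fin_one,
      Matrix.head_fin_const, smul_eq_mul, Fin.zero_eq_one_iff, Fin.one_eq_zero_iff,
      if_true, if_false, Ne, OfNat.ofNat_ne_one, not_false_iff, mul_one, mul_zero,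
      Matrix.cons_val_one, Matrix.head_cons] at hμ
    have hre := congrArg Complex.re hμ
    have him := congrArg Complex.im hμ
    simp [Complex.mul_re, Complex.mul_im] at hre him
    have hnorm : ‖μ‖ ^ 2 = μ.re ^ 2 + μ.im ^ 2 := by
      rw [Complex.sq_norm, Complex.normSq_apply]; ring
    have hpos : 0 < θ ^ 2 * E ^ 2 / ν := by positivity
    have h2 : (μ.re - (1 - θ * d * E)) * μ.im = 0 := by linarith
    rw [hnorm]
    rcases mul_eq_zero.mp h2 with h | h
    · have h' : μ.re = 1 - θ * d * E := by linarith [sub_eq_zero.mp h]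
      linear_combination (-1 : ℝ) * hre + (2 * μ.re) * h - θ ^ 2 * E ^ 2 * hσsq
    · exfalso
      have him0 : μ.im * μ.im = 0 := by rw [h]; ring
      have hpos' : 0 < θ * ν⁻¹ * E * (θ * E) := by positivity
      linarith [hre, him0, hpos', mul_self_nonneg (μ.re - (1 - θ * d * E))]
  · have h3 : 0 < θ * (1 - d * E) := mul_pos hθ (by linarith)
    nlinarith [h3, sq_nonneg (θ * σ * E)]
end

section
/- Fix reals ν > 0, γ ≥ 0, T > 0, 0 < α < T and θ₁ > 0, θ₂ > 0. Set σ₀ = √(1/ν), ω₀ = γ/ν, a₀ = σ₀·α, b₀ = σ₀·(T − α), N₀ = σ₀·cosh(σ₀·T) + ω₀·sinh(σ₀·T), E₀ = N₀ / ((σ₀·sinh b₀ + ω₀·cosh b₀)·σ₀·cosh a₀) and F₀ = N₀ / ((σ₀·cosh b₀ + ω₀·sinh b₀)·σ₀·sinh a₀). Then E₀ > 0, F₀ > 0, and every eigenvalue μ ∈ spectrum ℂ of the complexification of the 2×2 real matrix [[1, θ₁·ν⁻¹·F₀], [−θ₂·E₀, 1]] satisfies ‖μ‖ = √(1 + θ₁·θ₂·ν⁻¹·E₀·F₀)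 > 1. -/
open Real

/-- Zero-eigenvalue (d = 0) behavior of algorithm NN₁ₐ: the spectral radius of
the iteration matrix exceeds 1 for every choice of positive relaxation
parameters. -/
theorem stmt5 (ν γ T α θ₁ θ₂ : ℝ) (hν : 0 < ν) (hγ : 0 ≤ γ) (hT : 0 < T)
    (hα0 : 0 < α) (hαT : α < T) (hθ₁ : 0 < θ₁) (hθ₂ : 0 < θ₂)
    (σ₀ ω₀ a₀ b₀ N₀ E₀ F₀ : ℝ)
    (hσ₀ : σ₀ = Real.sqrt (1 / ν)) (hω₀ : ω₀ = γ / ν)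
    (ha₀ : a₀ = σ₀ * α) (hb₀ : b₀ = σ₀ * (T - α))
    (hN₀ : N₀ = σ₀ * Real.cosh (σ₀ * T) + ω₀ * Real.sinh (σ₀ * T))
    (hE₀ : E₀ = N₀ / ((σ₀ * Real.sinh b₀ + ω₀ * Real.cosh b₀) * (σ₀ * Real.cosh a₀)))
    (hF₀ : F₀ = N₀ / ((σ₀ * Real.cosh b₀ + ω₀ * Real.sinh b₀) * (σ₀ * Real.sinh a₀))) :
    0 < E₀ ∧ 0 < F₀ ∧
    (∀ μ ∈ spectrum ℂ
        ((!![1, θ₁ * ν⁻¹ * F₀; -(θ₂ * E₀), 1]).map (Complex.ofReal ·)),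
      ‖μ‖ = Real.sqrt (1 + θ₁ * θ₂ * ν⁻¹ * E₀ * F₀)) ∧
    Real.sqrt (1 + θ₁ * θ₂ * ν⁻¹ * E₀ * F₀) > 1 := by
  have hσpos : 0 < σ₀ := by
    rw [hσ₀]; exact Real.sqrt_pos.mpr (by positivity)
  have hωnn : 0 ≤ ω₀ := by rw [hω₀]; positivity
  have hapos : 0 < a₀ := by rw [ha₀]; positivity
  have hbpos : 0 < b₀ := by rw [hb₀]; nlinarith
  have hN : 0 < N₀ := by
    rw [hN₀]
    have h1 : 0 < σ₀ * Real.cosh (σ₀ * T) := by positivity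
    have h2 : 0 ≤ ω₀ * Real.sinh (σ₀ * T) :=
      mul_nonneg hωnn (Real.sinh_pos_iff.mpr (by positivity)).le
    linarith
  have hE : 0 < E₀ := by
    rw [hE₀]
    apply div_pos hN
    apply mul_pos _ (by positivity)
    have := Real.sinh_pos_iff.mpr hbpos
    nlinarith [Real.cosh_pos (x := b₀)]
  have hF : 0 < F₀ := by
    rw [hF₀]
    apply div_pos hN
    apply mul_pos
    · nlinarith [Real.cosh_pos (x := b₀), Real.sinh_pos_iff.mpr hbpos]
    · exact mul_pos hσpos (Real.sinh_pos_iff.mpr hapos)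
  set c : ℝ := θ₁ * θ₂ * ν⁻¹ * E₀ * F₀ with hc
  have hcpos : 0 < c := by positivity
  refine ⟨hE, hF, ?_, ?_⟩
  · intro μ hμ
    rw [spectrum.mem_iff] at hμ
    rw [Matrix.isUnit_iff_isUnit_det, isUnit_iff_ne_zero, not_not] at hμ
    have hmat : (algebraMap ℂ (Matrix (Fin 2) (Fin 2) ℂ)) μ -
        (!![1, θ₁ * ν⁻¹ * F₀; -(θ₂ * E₀), 1]).map (Complex.ofReal ·) =
        !![μ - 1, -((θ₁ : ℂ) * (ν : ℂ)⁻¹ * (F₀ : ℂ)); (θ₂ : ℂ) * (E₀ : ℂ), μ - 1] := by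
      ext i j
      fin_cases i <;> fin_cases j <;>
        simp [Matrix.algebraMap_matrix_apply]
    rw [hmat, Matrix.det_fin_two_of] at hμ
    have hdet : (μ - 1) ^ 2 + (c : ℂ) = 0 := by
      rw [← hμ]; push_cast [hc]; ring
    have hsq : (μ - 1) ^ 2 = -(c : ℂ) := by linear_combination hdet
    have h1 := congrArg Complex.re hsq
    have h2 := congrArg Complex.im hsq
    simp [pow_two, Complex.mul_re, Complex.mul_im] at h1 h2
    have hre : μ.re = 1 := by
      rcases mul_eq_zero.mp (by linear_combination h2 / 2 : (μ.re - 1) * μ.im = 0) with h | h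
      · linarith
      · exfalso; nlinarith [sq_nonneg (μ.re - 1)]
    have him : μ.im ^ 2 = c := by nlinarith
    have hnormsq : ‖μ‖ ^ 2 = 1 + c := by
      rw [Complex.sq_norm, Complex.normSq_apply, hre, ← him]; ring
    calc ‖μ‖ = Real.sqrt (‖μ‖ ^ 2) := (Real.sqrt_sq (norm_nonneg _)).symm
      _ = Real.sqrt (1 + c) := by rw [hnormsq]
  · have : (1 : ℝ) = Real.sqrt 1 := (Real.sqrt_one).symm
    rw [gt_iff_lt, this]
    exact Real.sqrt_lt_sqrt (by norm_num) (by linarith)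
end

section
/- Fix reals ν > 0, γ ≥ 0, T > 0 and 0 < α < T, and for d > 0 define σ(d) = √(d² + 1/ν), ω(d) = d + γ/ν, a(d) = σ(d)·α, b(d) = σ(d)·(T − α), N(d) = σ(d)·cosh(σ(d)·T) + ω(d)·sinh(σ(d)·T), E(d) = N(d) / ((σ(d)·sinh(b(d)) + ω(d)·cosh(b(d)))·(σ(d)·cosh(a(d)) + d·sinh(a(d)))) and F(d) = N(d) / ((σ(d)·cosh(b(d)) + ω(d)·sinh(b(d)))·(σ(d)·sinh(a(d)) + d·cosh(a(d)))). Then d·E(d) → 1 and d·F(d) → 1 as d → ∞ (Filter.Tendsto along atTop to the neighborhood filter of 1). -/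
open Real Filter

lemma auxS (ν : ℝ) (hν : 0 < ν) :
    Tendsto (fun d : ℝ => Real.sqrt (d ^ 2 + 1 / ν)) atTop atTop := by
  apply tendsto_atTop_mono' atTop (f₁ := fun d : ℝ => d)
  · filter_upwards [eventually_ge_atTop (0 : ℝ)] with d hd
    calc d = Real.sqrt (d ^ 2) := by rw [Real.sqrt_sq hd]
    _ ≤ Real.sqrt (d ^ 2 + 1 / ν) := Real.sqrt_le_sqrt (by nlinarith [one_div_pos.mpr hν])
  · exact tendsto_id

lemma auxQ (ν c : ℝ) (hν : 0 < ν) (hc : 0 < c) :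
    Tendsto (fun d : ℝ => Real.exp (-(2 * Real.sqrt (d ^ 2 + 1 / ν) * c))) atTop (nhds 0) := by
  have h1 : Tendsto (fun d : ℝ => -(2 * Real.sqrt (d ^ 2 + 1 / ν) * c)) atTop atBot := by
    apply Filter.tendsto_neg_atBot_iff.mpr
    exact ((auxS ν hν).const_mul_atTop (by norm_num : (0:ℝ) < 2)).atTop_mul_const hc
  exact Real.tendsto_exp_atBot.comp h1

lemma auxR (ν : ℝ) (hν : 0 < ν) :
    Tendsto (fun d : ℝ => Real.sqrt (d ^ 2 + 1 / ν) / d) atTop (nhds 1) := by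
  have h0 : Tendsto (fun d : ℝ => 1 + 1 / ν * (d ^ 2)⁻¹) atTop (nhds (1 + 1 / ν * 0)) :=
    tendsto_const_nhds.add (((tendsto_pow_atTop two_ne_zero).inv_tendsto_atTop).const_mul _)
  have h1 : Tendsto (fun d : ℝ => Real.sqrt (1 + 1 / ν * (d ^ 2)⁻¹)) atTop (nhds 1) := by
    have := (Real.continuous_sqrt.tendsto (1 + 1 / ν * 0)).comp h0
    simpa [Function.comp_def] using this
  apply h1.congr'
  filter_upwards [eventually_gt_atTop (0 : ℝ)] with d hd
  have hd2 : (0:ℝ) < d ^ 2 := by positivity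
  have : (1 : ℝ) + 1 / ν * (d ^ 2)⁻¹ = (d ^ 2 + 1 / ν) / d ^ 2 := by field_simp
  rw [this, Real.sqrt_div (by positivity), Real.sqrt_sq hd.le]

lemma auxW (γ ν : ℝ) : Tendsto (fun d : ℝ => (d + γ / ν) / d) atTop (nhds 1) := by
  have h0 : Tendsto (fun d : ℝ => 1 + γ / ν * d⁻¹) atTop (nhds (1 + γ / ν * 0)) :=
    tendsto_const_nhds.add (tendsto_inv_atTop_zero.const_mul _)
  apply (by simpa using h0 : Tendsto (fun d : ℝ => 1 + γ / ν * d⁻¹) atTop (nhds 1)).congr'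
  filter_upwards [eventually_gt_atTop (0 : ℝ)] with d hd
  have : 1 + γ / ν * d⁻¹ = (d + γ / ν) / d := by
    generalize γ / ν = c
    field_simp
  exact this

lemma auxTendsto (ν γ T α ε : ℝ) (hν : 0 < ν) (hT : 0 < T)
    (hα0 : 0 < α) (hαT : α < T) :
    Tendsto (fun d : ℝ =>
      2 * (Real.sqrt (d ^ 2 + 1 / ν) / d * (1 + Real.exp (-(2 * Real.sqrt (d ^ 2 + 1 / ν) * T)))
        + (d + γ / ν) / d * (1 - Real.exp (-(2 * Real.sqrt (d ^ 2 + 1 / ν) * T)))) /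
      ((Real.sqrt (d ^ 2 + 1 / ν) / d * (1 + ε * Real.exp (-(2 * Real.sqrt (d ^ 2 + 1 / ν) * (T - α))))
        + (d + γ / ν) / d * (1 - ε * Real.exp (-(2 * Real.sqrt (d ^ 2 + 1 / ν) * (T - α))))) *
       (Real.sqrt (d ^ 2 + 1 / ν) / d * (1 - ε * Real.exp (-(2 * Real.sqrt (d ^ 2 + 1 / ν) * α)))
        + (1 + ε * Real.exp (-(2 * Real.sqrt (d ^ 2 + 1 / ν) * α)))))) atTop (nhds 1) := by
  have hR := auxR ν hν
  have hW := auxW γ ν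
  have hQT := auxQ ν T hν hT
  have hQB := auxQ ν (T - α) hν (by linarith)
  have hQA := auxQ ν α hν hα0
  have hnum : Tendsto (fun d : ℝ =>
      2 * (Real.sqrt (d ^ 2 + 1 / ν) / d * (1 + Real.exp (-(2 * Real.sqrt (d ^ 2 + 1 / ν) * T)))
        + (d + γ / ν) / d * (1 - Real.exp (-(2 * Real.sqrt (d ^ 2 + 1 / ν) * T)))))
      atTop (nhds (2 * (1 * (1 + 0) + 1 * (1 - 0)))) :=
    (((hR.mul (tendsto_const_nhds.add hQT)).add
      (hW.mul (tendsto_const_nhds.sub hQT))).const_mul 2)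
  have hden : Tendsto (fun d : ℝ =>
      (Real.sqrt (d ^ 2 + 1 / ν) / d * (1 + ε * Real.exp (-(2 * Real.sqrt (d ^ 2 + 1 / ν) * (T - α))))
        + (d + γ / ν) / d * (1 - ε * Real.exp (-(2 * Real.sqrt (d ^ 2 + 1 / ν) * (T - α))))) *
       (Real.sqrt (d ^ 2 + 1 / ν) / d * (1 - ε * Real.exp (-(2 * Real.sqrt (d ^ 2 + 1 / ν) * α)))
        + (1 + ε * Real.exp (-(2 * Real.sqrt (d ^ 2 + 1 / ν) * α)))))
      atTop (nhds ((1 * (1 + ε * 0) + 1 * (1 - ε * 0)) * (1 * (1 - ε * 0) + (1 + ε * 0)))) :=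
    ((hR.mul (tendsto_const_nhds.add (hQB.const_mul ε))).add
      (hW.mul (tendsto_const_nhds.sub (hQB.const_mul ε)))).mul
      ((hR.mul (tendsto_const_nhds.sub (hQA.const_mul ε))).add
        (tendsto_const_nhds.add (hQA.const_mul ε)))
  have h := hnum.div hden (by norm_num)
  have heq : (2 * (1 * (1 + 0) + 1 * (1 - 0))) /
      ((1 * (1 + ε * 0) + 1 * (1 - ε * 0)) * (1 * (1 - ε * 0) + (1 + ε * 0))) = (1:ℝ) := by
    norm_num
  rw [heq] at h
  exact h

set_option maxHeartbeats 2000000 in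
/-- Large-eigenvalue asymptotics of the interface quantities of algorithm NN₁ₐ:
`d·E(d) → 1` and `d·F(d) → 1` as `d → ∞`. -/
theorem stmt6 (ν γ T α : ℝ) (hν : 0 < ν) (hγ : 0 ≤ γ) (hT : 0 < T)
    (hα0 : 0 < α) (hαT : α < T)
    (σ ω a b N E F : ℝ → ℝ)
    (hσ : ∀ d, 0 < d → σ d = Real.sqrt (d ^ 2 + 1 / ν))
    (hω : ∀ d, 0 < d → ω d = d + γ / ν)
    (ha : ∀ d, 0 < d → a d = σ d * α)
    (hb : ∀ d, 0 < d → b d = σ d * (T - α))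
    (hN : ∀ d, 0 < d → N d = σ d * Real.cosh (σ d * T) + ω d * Real.sinh (σ d * T))
    (hE : ∀ d, 0 < d → E d = N d /
      ((σ d * Real.sinh (b d) + ω d * Real.cosh (b d)) *
        (σ d * Real.cosh (a d) + d * Real.sinh (a d))))
    (hF : ∀ d, 0 < d → F d = N d /
      ((σ d * Real.cosh (b d) + ω d * Real.sinh (b d)) *
        (σ d * Real.sinh (a d) + d * Real.cosh (a d)))) :
    Tendsto (fun d => d * E d) atTop (nhds 1) ∧
    Tendsto (fun d => d * F d) atTop (nhds 1) := by
  constructor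
  · apply (auxTendsto ν γ T α (-1) hν hT hα0 hαT).congr'
    filter_upwards [eventually_gt_atTop (0 : ℝ)] with d hd
    have hs : 0 < σ d := by rw [hσ d hd]; positivity
    have hw : 0 < ω d := by rw [hω d hd]; positivity
    rw [hE d hd, hN d hd, ha d hd, hb d hd, ← hσ d hd, ← hω d hd]
    set s := σ d with hs'
    set w := ω d with hw'
    have hD1 : 0 < s * Real.sinh (s * (T - α)) + w * Real.cosh (s * (T - α)) :=
      add_pos (mul_pos hs (Real.sinh_pos_iff.mpr (by nlinarith))) (mul_pos hw (Real.cosh_pos _))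
    have hD2 : 0 < s * Real.cosh (s * α) + d * Real.sinh (s * α) :=
      add_pos (mul_pos hs (Real.cosh_pos _)) (mul_pos hd (Real.sinh_pos_iff.mpr (by nlinarith)))
    have hx1 : Real.exp (-(2 * s * α)) < 1 := Real.exp_lt_one_iff.mpr (by nlinarith)
    have hy1 : Real.exp (-(2 * s * (T - α))) < 1 := Real.exp_lt_one_iff.mpr (by nlinarith)
    have hx0 := Real.exp_pos (-(2 * s * α))
    have hy0 := Real.exp_pos (-(2 * s * (T - α)))
    have hB1 : 0 < s / d * (1 + (-1) * Real.exp (-(2 * s * (T - α))))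
        + w / d * (1 - (-1) * Real.exp (-(2 * s * (T - α)))) := by
      have h1 := div_pos hs hd
      have h2 := div_pos hw hd
      nlinarith
    have hB2 : 0 < s / d * (1 - (-1) * Real.exp (-(2 * s * α)))
        + (1 + (-1) * Real.exp (-(2 * s * α))) := by
      have h1 := div_pos hs hd
      nlinarith
    rw [show d * ((s * Real.cosh (s * T) + w * Real.sinh (s * T)) /
        ((s * Real.sinh (s * (T - α)) + w * Real.cosh (s * (T - α))) *
          (s * Real.cosh (s * α) + d * Real.sinh (s * α)))) =
        d * (s * Real.cosh (s * T) + w * Real.sinh (s * T)) /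
        ((s * Real.sinh (s * (T - α)) + w * Real.cosh (s * (T - α))) *
          (s * Real.cosh (s * α) + d * Real.sinh (s * α))) from (mul_div_assoc _ _ _).symm]
    rw [div_eq_div_iff (by positivity) (by positivity)]
    have hAB : Real.exp (s * T) = Real.exp (s * α) * Real.exp (s * (T - α)) := by
      rw [← Real.exp_add]; ring_nf
    have hABi : Real.exp (-(s * T)) = (Real.exp (s * α) * Real.exp (s * (T - α)))⁻¹ := by
      rw [Real.exp_neg, hAB]
    have hAi : Real.exp (-(s * α)) = (Real.exp (s * α))⁻¹ := Real.exp_neg _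
    have hBi : Real.exp (-(s * (T - α))) = (Real.exp (s * (T - α)))⁻¹ := Real.exp_neg _
    have hX : Real.exp (-(2 * s * α)) = (Real.exp (s * α) * Real.exp (s * α))⁻¹ := by
      rw [Real.exp_neg, show (2:ℝ) * s * α = s * α + s * α by ring, Real.exp_add]
    have hY : Real.exp (-(2 * s * (T - α))) =
        (Real.exp (s * (T - α)) * Real.exp (s * (T - α)))⁻¹ := by
      rw [Real.exp_neg, show (2:ℝ) * s * (T - α) = s * (T - α) + s * (T - α) by ring,
        Real.exp_add]
    have hZ : Real.exp (-(2 * s * T)) =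
        (Real.exp (s * α) * Real.exp (s * (T - α)) *
          (Real.exp (s * α) * Real.exp (s * (T - α))))⁻¹ := by
      rw [Real.exp_neg, show (2:ℝ) * s * T = s * T + s * T by ring, Real.exp_add, hAB]
    have hA0 : Real.exp (s * α) ≠ 0 := (Real.exp_pos _).ne'
    have hB0 : Real.exp (s * (T - α)) ≠ 0 := (Real.exp_pos _).ne'
    simp only [Real.cosh_eq, Real.sinh_eq, hAB, hABi, hAi, hBi, hX, hY, hZ]
    set A := Real.exp (s * α) with hA2
    set B := Real.exp (s * (T - α)) with hB2
    field_simp [hA0, hB0, hd.ne']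
    ring
  · apply (auxTendsto ν γ T α 1 hν hT hα0 hαT).congr'
    filter_upwards [eventually_gt_atTop (0 : ℝ)] with d hd
    have hs : 0 < σ d := by rw [hσ d hd]; positivity
    have hw : 0 < ω d := by rw [hω d hd]; positivity
    rw [hF d hd, hN d hd, ha d hd, hb d hd, ← hσ d hd, ← hω d hd]
    set s := σ d with hs'
    set w := ω d with hw'
    have hD1 : 0 < s * Real.cosh (s * (T - α)) + w * Real.sinh (s * (T - α)) :=
      add_pos (mul_pos hs (Real.cosh_pos _)) (mul_pos hw (Real.sinh_pos_iff.mpr (by nlinarith)))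
    have hD2 : 0 < s * Real.sinh (s * α) + d * Real.cosh (s * α) :=
      add_pos (mul_pos hs (Real.sinh_pos_iff.mpr (by nlinarith))) (mul_pos hd (Real.cosh_pos _))
    have hx1 : Real.exp (-(2 * s * α)) < 1 := Real.exp_lt_one_iff.mpr (by nlinarith)
    have hy1 : Real.exp (-(2 * s * (T - α))) < 1 := Real.exp_lt_one_iff.mpr (by nlinarith)
    have hx0 := Real.exp_pos (-(2 * s * α))
    have hy0 := Real.exp_pos (-(2 * s * (T - α)))
    have hB1 : 0 < s / d * (1 + 1 * Real.exp (-(2 * s * (T - α))))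
        + w / d * (1 - 1 * Real.exp (-(2 * s * (T - α)))) := by
      have h1 := div_pos hs hd
      have h2 := div_pos hw hd
      nlinarith
    have hB2 : 0 < s / d * (1 - 1 * Real.exp (-(2 * s * α)))
        + (1 + 1 * Real.exp (-(2 * s * α))) := by
      have h1 := div_pos hs hd
      nlinarith
    rw [show d * ((s * Real.cosh (s * T) + w * Real.sinh (s * T)) /
        ((s * Real.cosh (s * (T - α)) + w * Real.sinh (s * (T - α))) *
          (s * Real.sinh (s * α) + d * Real.cosh (s * α)))) =
        d * (s * Real.cosh (s * T) + w * Real.sinh (s * T)) /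
        ((s * Real.cosh (s * (T - α)) + w * Real.sinh (s * (T - α))) *
          (s * Real.sinh (s * α) + d * Real.cosh (s * α))) from (mul_div_assoc _ _ _).symm]
    rw [div_eq_div_iff (by positivity) (by positivity)]
    have hAB : Real.exp (s * T) = Real.exp (s * α) * Real.exp (s * (T - α)) := by
      rw [← Real.exp_add]; ring_nf
    have hABi : Real.exp (-(s * T)) = (Real.exp (s * α) * Real.exp (s * (T - α)))⁻¹ := by
      rw [Real.exp_neg, hAB]
    have hAi : Real.exp (-(s * α)) = (Real.exp (s * α))⁻¹ := Real.exp_neg _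
    have hBi : Real.exp (-(s * (T - α))) = (Real.exp (s * (T - α)))⁻¹ := Real.exp_neg _
    have hX : Real.exp (-(2 * s * α)) = (Real.exp (s * α) * Real.exp (s * α))⁻¹ := by
      rw [Real.exp_neg, show (2:ℝ) * s * α = s * α + s * α by ring, Real.exp_add]
    have hY : Real.exp (-(2 * s * (T - α))) =
        (Real.exp (s * (T - α)) * Real.exp (s * (T - α)))⁻¹ := by
      rw [Real.exp_neg, show (2:ℝ) * s * (T - α) = s * (T - α) + s * (T - α) by ring,
        Real.exp_add]
    have hZ : Real.exp (-(2 * s * T)) =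
        (Real.exp (s * α) * Real.exp (s * (T - α)) *
          (Real.exp (s * α) * Real.exp (s * (T - α))))⁻¹ := by
      rw [Real.exp_neg, show (2:ℝ) * s * T = s * T + s * T by ring, Real.exp_add, hAB]
    have hA0 : Real.exp (s * α) ≠ 0 := (Real.exp_pos _).ne'
    have hB0 : Real.exp (s * (T - α)) ≠ 0 := (Real.exp_pos _).ne'
    simp only [Real.cosh_eq, Real.sinh_eq, hAB, hABi, hAi, hBi, hX, hY, hZ]
    set A := Real.exp (s * α) with hA2
    set B := Real.exp (s * (T - α)) with hB2
    field_simp [hA0, hB0, hd.ne']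
end

section
/- Fix reals ν > 0, γ ≥ 0, T > 0, 0 < α < T, d ≥ 0 and θ₁, θ₂ ∈ ℝ. Set σ = √(d² + 1/ν), ω = d + γ/ν, a = σ·α, b = σ·(T − α), N = σ·cosh(σ·T) + ω·sinh(σ·T), E = N / ((σ·sinh b + ω·cosh b)·(σ·cosh a + d·sinh a)) and F = N / ((σ·cosh b + ω·sinh b)·cosh a). Then the characteristic polynomial of the 2×2 real matrix [[1 − θ₁·d·E, −θ₁·d·F], [−θ₂·E, 1 − θ₂·F]] equals (X − 1)·(X − (1 − θ₁·d·E − θ₂·F)); in particular 1 is an eigenvalue, so the corresponding interface iteration stagnates for every choice of θ₁, θ₂. -/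
open Real Polynomial

/-- Stagnation of the two-parameter NN variant with Dirichlet step on (z, μ)
and Neumann correction only on the primal correction state ψ: the iteration
matrix has characteristic polynomial `(X−1)(X−(1−θ₁dE−θ₂F))`, hence eigenvalue 1. -/
theorem stmt7 (ν γ T α d θ₁ θ₂ : ℝ) (hν : 0 < ν) (hγ : 0 ≤ γ) (hT : 0 < T)
    (hα0 : 0 < α) (hαT : α < T) (hd : 0 ≤ d)
    (σ ω a b N E F : ℝ)
    (hσ : σ = Real.sqrt (d ^ 2 + 1 / ν)) (hω : ω = d + γ / ν)
    (ha : a = σ * α) (hb : b = σ * (T - α))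
    (hN : N = σ * Real.cosh (σ * T) + ω * Real.sinh (σ * T))
    (hE : E = N / ((σ * Real.sinh b + ω * Real.cosh b) * (σ * Real.cosh a + d * Real.sinh a)))
    (hF : F = N / ((σ * Real.cosh b + ω * Real.sinh b) * Real.cosh a)) :
    Matrix.charpoly !![1 - θ₁ * d * E, -(θ₁ * d * F); -(θ₂ * E), 1 - θ₂ * F] =
      (X - C 1) * (X - C (1 - θ₁ * d * E - θ₂ * F)) ∧
    (1 : ℝ) ∈ spectrum ℝ !![1 - θ₁ * d * E, -(θ₁ * d * F); -(θ₂ * E), 1 - θ₂ * F] := by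
  set M : Matrix (Fin 2) (Fin 2) ℝ :=
    !![1 - θ₁ * d * E, -(θ₁ * d * F); -(θ₂ * E), 1 - θ₂ * F] with hM
  have hcp : Matrix.charpoly M = (X - C 1) * (X - C (1 - θ₁ * d * E - θ₂ * F)) := by
    rw [Matrix.charpoly, Matrix.det_fin_two]
    rw [Matrix.charmatrix_apply_eq, Matrix.charmatrix_apply_eq,
      Matrix.charmatrix_apply_ne _ _ _ (by decide : (0 : Fin 2) ≠ 1),
      Matrix.charmatrix_apply_ne _ _ _ (by decide : (1 : Fin 2) ≠ 0)]
    have h00 : M 0 0 = 1 - θ₁ * d * E := rfl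
    have h01 : M 0 1 = -(θ₁ * d * F) := rfl
    have h10 : M 1 0 = -(θ₂ * E) := rfl
    have h11 : M 1 1 = 1 - θ₂ * F := rfl
    rw [h00, h01, h10, h11]
    simp only [map_sub, map_add, map_mul, map_one, map_neg, C_1]
    ring
  refine ⟨hcp, ?_⟩
  rw [spectrum.mem_iff]
  intro h
  rw [Matrix.isUnit_iff_isUnit_det] at h
  have : ((algebraMap ℝ (Matrix (Fin 2) (Fin 2) ℝ)) 1 - M).det = 0 := by
    rw [Matrix.det_fin_two]
    simp [hM, Matrix.algebraMap_matrix_apply]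
    ring
  rw [this] at h
  exact h.ne_zero rfl
end

section
/- Fix reals ν > 0, γ ≥ 0, T > 0, 0 < α < T and θ ∈ ℝ, and for d > 0 define σ(d) = √(d² + 1/ν), ω(d) = d + γ/ν, a(d) = σ(d)·α, b(d) = σ(d)·(T − α), N(d) = σ(d)·cosh(σ(d)·T) + ω(d)·sinh(σ(d)·T), E(d) = N(d) / ((σ(d)·sinh(b(d)) + ω(d)·cosh(b(d)))·(σ(d)·cosh(a(d)) + d·sinh(a(d)))), and F(d) = N(d) / ((σ(d)·cosh(b(d)) + ω(d)·sinh(b(d)))·cosh(a(d))). Then E(d) → 0 and F(d) → 2 as d → ∞; consequently |1 − θ·(E(d) + F(d))| → |1 − 2·θ| as d → ∞ (Filter.Tendsto along atTop). -/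
open Real Filter

lemma rbound (S W : ℝ) (hS : 0 < S) (hW : 0 < W) : |(S - W)/(S + W)| < 1 := by
  rw [abs_div, abs_of_pos (by linarith : (0:ℝ) < S + W), div_lt_one (by linarith)]
  rw [abs_sub_lt_iff]; constructor <;> linarith

lemma onesub_pos (r q : ℝ) (hr : |r| < 1) (hq0 : 0 < q) (hq1 : q < 1) :
    0 < 1 + r * q ∧ 0 < 1 - r * q := by
  have h1 : -|r| ≤ r := neg_abs_le r
  have h2 : r ≤ |r| := le_abs_self r
  constructor <;> nlinarith

lemma idF (S W A B : ℝ) (hS : 0 < S) (hW : 0 < W) (hA : 0 < A) (hB : 0 < B) :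
    (S * Real.cosh (A + B) + W * Real.sinh (A + B)) /
      ((S * Real.cosh B + W * Real.sinh B) * Real.cosh A)
    = 2 * (1 + (S - W)/(S + W) * Real.exp (-(2*(A + B)))) /
      ((1 + (S - W)/(S + W) * Real.exp (-(2*B))) * (1 + Real.exp (-(2*A)))) := by
  have hSW : (0:ℝ) < S + W := by linarith
  have hr := rbound S W hS hW
  have hqB : Real.exp (-(2*B)) < 1 := Real.exp_lt_one_iff.mpr (by linarith)
  have h1 := (onesub_pos _ _ hr (Real.exp_pos _) hqB).1
  have hD : 0 < (S * Real.cosh B + W * Real.sinh B) * Real.cosh A := by positivity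
  have h2 : 0 < 1 + Real.exp (-(2*A)) := by positivity
  rw [div_eq_div_iff (ne_of_gt hD) (by positivity)]
  have eA : Real.exp (-(2*A)) = (Real.exp A)⁻¹ * (Real.exp A)⁻¹ := by
    rw [show -(2*A) = -A + -A by ring, Real.exp_add, Real.exp_neg]
  have eB : Real.exp (-(2*B)) = (Real.exp B)⁻¹ * (Real.exp B)⁻¹ := by
    rw [show -(2*B) = -B + -B by ring, Real.exp_add, Real.exp_neg]
  have eAB : Real.exp (-(2*(A+B))) = (Real.exp A)⁻¹ * (Real.exp A)⁻¹ * ((Real.exp B)⁻¹ * (Real.exp B)⁻¹) := by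
    rw [show -(2*(A+B)) = (-A + -A) + (-B + -B) by ring]
    simp [Real.exp_add, Real.exp_neg]
  simp only [Real.cosh_eq, Real.sinh_eq, Real.exp_neg, Real.exp_add, eA, eB, eAB]
  have h3 := Real.exp_ne_zero A
  have h4 := Real.exp_ne_zero B
  field_simp
  ring

lemma idE (S W D A B : ℝ) (hS : 0 < S) (hW : 0 < W) (hD : 0 < D) (hA : 0 < A) (hB : 0 < B) :
    (S * Real.cosh (A + B) + W * Real.sinh (A + B)) /
      ((S * Real.sinh B + W * Real.cosh B) * (S * Real.cosh A + D * Real.sinh A))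
    = 2 * (1 + (S - W)/(S + W) * Real.exp (-(2*(A + B)))) /
      ((1 - (S - W)/(S + W) * Real.exp (-(2*B))) *
        ((S + D) + (S - D) * Real.exp (-(2*A)))) := by
  have hSW : (0:ℝ) < S + W := by linarith
  have hr := rbound S W hS hW
  have hqB : Real.exp (-(2*B)) < 1 := Real.exp_lt_one_iff.mpr (by linarith)
  have h1 := (onesub_pos _ _ hr (Real.exp_pos _) hqB).2
  have hrd := rbound S D hS hD
  have hqA : Real.exp (-(2*A)) < 1 := Real.exp_lt_one_iff.mpr (by linarith)
  have h2 : 0 < (S + D) + (S - D) * Real.exp (-(2*A)) := by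
    have hSD : (0:ℝ) < S + D := by linarith
    have := (onesub_pos ((S-D)/(S+D)) _ hrd (Real.exp_pos _) hqA).1
    have heq : (S + D) + (S - D) * Real.exp (-(2*A))
        = (S + D) * (1 + (S-D)/(S+D) * Real.exp (-(2*A))) := by field_simp
    rw [heq]; positivity
  have hDen : 0 < (S * Real.sinh B + W * Real.cosh B) * (S * Real.cosh A + D * Real.sinh A) := by
    positivity
  rw [div_eq_div_iff (ne_of_gt hDen) (by positivity)]
  have eA : Real.exp (-(2*A)) = (Real.exp A)⁻¹ * (Real.exp A)⁻¹ := by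
    rw [show -(2*A) = -A + -A by ring, Real.exp_add, Real.exp_neg]
  have eB : Real.exp (-(2*B)) = (Real.exp B)⁻¹ * (Real.exp B)⁻¹ := by
    rw [show -(2*B) = -B + -B by ring, Real.exp_add, Real.exp_neg]
  have eAB : Real.exp (-(2*(A+B))) = (Real.exp A)⁻¹ * (Real.exp A)⁻¹ * ((Real.exp B)⁻¹ * (Real.exp B)⁻¹) := by
    rw [show -(2*(A+B)) = (-A + -A) + (-B + -B) by ring]
    simp [Real.exp_add, Real.exp_neg]
  simp only [Real.cosh_eq, Real.sinh_eq, Real.exp_neg, Real.exp_add, eA, eB, eAB]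
  have h3 := Real.exp_ne_zero A
  have h4 := Real.exp_ne_zero B
  field_simp
  ring

section auxlimits
variable (ν γ T α : ℝ)

lemma sqrtS_pos (hν : 0 < ν) (d : ℝ) : 0 < Real.sqrt (d ^ 2 + 1 / ν) :=
  Real.sqrt_pos.mpr (by positivity)

lemma sqrtS_ge (hν : 0 < ν) (d : ℝ) : d ≤ Real.sqrt (d ^ 2 + 1 / ν) := by
  calc d ≤ |d| := le_abs_self d
    _ = Real.sqrt (d ^ 2) := (Real.sqrt_sq_eq_abs d).symm
    _ ≤ _ := Real.sqrt_le_sqrt (le_add_of_nonneg_right (by positivity))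

lemma sqrtS_tendsto (hν : 0 < ν) :
    Tendsto (fun d : ℝ => Real.sqrt (d ^ 2 + 1 / ν)) atTop atTop :=
  tendsto_atTop_mono (sqrtS_ge ν hν) tendsto_id

lemma exp_lim (hν : 0 < ν) (c : ℝ) (hc : 0 < c) :
    Tendsto (fun d : ℝ => Real.exp (-(2 * (Real.sqrt (d ^ 2 + 1 / ν) * c)))) atTop (nhds 0) :=
  Real.tendsto_exp_atBot.comp (tendsto_neg_atTop_atBot.comp
    (((sqrtS_tendsto ν hν).atTop_mul_const hc).const_mul_atTop two_pos))

lemma Rp_lim (hν : 0 < ν) (hγ : 0 ≤ γ) (c : ℝ) (hc : 0 < c) :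
    Tendsto (fun d : ℝ =>
      (Real.sqrt (d ^ 2 + 1 / ν) - (d + γ / ν)) / (Real.sqrt (d ^ 2 + 1 / ν) + (d + γ / ν)) *
        Real.exp (-(2 * (Real.sqrt (d ^ 2 + 1 / ν) * c)))) atTop (nhds 0) := by
  apply squeeze_zero_norm' _ (exp_lim ν hν c hc)
  filter_upwards [eventually_gt_atTop 0] with d hd
  have hW : 0 < d + γ / ν := by positivity
  have hr := le_of_lt (rbound _ _ (sqrtS_pos ν hν d) hW)
  have he : 0 < Real.exp (-(2 * (Real.sqrt (d ^ 2 + 1 / ν) * c))) := Real.exp_pos _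
  rw [norm_mul, Real.norm_eq_abs, Real.norm_eq_abs, abs_of_pos he]
  nlinarith [abs_nonneg ((Real.sqrt (d ^ 2 + 1 / ν) - (d + γ / ν)) / (Real.sqrt (d ^ 2 + 1 / ν) + (d + γ / ν)))]

lemma Sd_lim (hν : 0 < ν) (hα0 : 0 < α) :
    Tendsto (fun d : ℝ => (Real.sqrt (d ^ 2 + 1 / ν) - d) *
      Real.exp (-(2 * (Real.sqrt (d ^ 2 + 1 / ν) * α)))) atTop (nhds 0) := by
  have hlim : Tendsto (fun d : ℝ => 1 / ν * Real.exp (-(2 * (Real.sqrt (d ^ 2 + 1 / ν) * α))))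
      atTop (nhds 0) := by
    simpa using (exp_lim ν hν α hα0).const_mul (1 / ν)
  apply squeeze_zero_norm' _ hlim
  filter_upwards [eventually_ge_atTop 1] with d hd
  set s := Real.sqrt (d ^ 2 + 1 / ν) with hs
  have hsge : d ≤ s := sqrtS_ge ν hν d
  have hsq : s ^ 2 = d ^ 2 + 1 / ν := by rw [hs]; exact Real.sq_sqrt (by positivity)
  have he : 0 < Real.exp (-(2 * (s * α))) := Real.exp_pos _
  have h1 : 0 ≤ (s - d) * Real.exp (-(2 * (s * α))) := mul_nonneg (by linarith) he.le
  rw [Real.norm_eq_abs, abs_of_nonneg h1]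
  have hsd : s - d ≤ 1 / ν := by nlinarith
  nlinarith


lemma auxE (hν : 0 < ν) (hγ : 0 ≤ γ) (hT : 0 < T) (hα0 : 0 < α) (hαT : α < T) :
    Tendsto (fun d : ℝ =>
      (Real.sqrt (d ^ 2 + 1 / ν) * Real.cosh (Real.sqrt (d ^ 2 + 1 / ν) * T) +
        (d + γ / ν) * Real.sinh (Real.sqrt (d ^ 2 + 1 / ν) * T)) /
      ((Real.sqrt (d ^ 2 + 1 / ν) * Real.sinh (Real.sqrt (d ^ 2 + 1 / ν) * (T - α)) +
          (d + γ / ν) * Real.cosh (Real.sqrt (d ^ 2 + 1 / ν) * (T - α))) *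
        (Real.sqrt (d ^ 2 + 1 / ν) * Real.cosh (Real.sqrt (d ^ 2 + 1 / ν) * α) +
          d * Real.sinh (Real.sqrt (d ^ 2 + 1 / ν) * α)))) atTop (nhds 0) := by
  have hTα : 0 < T - α := by linarith
  have hnum : Tendsto (fun d : ℝ =>
      2 * (1 + (Real.sqrt (d ^ 2 + 1 / ν) - (d + γ / ν)) / (Real.sqrt (d ^ 2 + 1 / ν) + (d + γ / ν)) *
        Real.exp (-(2 * (Real.sqrt (d ^ 2 + 1 / ν) * T))))) atTop (nhds 2) := by
    have := ((tendsto_const_nhds (x := (1:ℝ)) (f := atTop)).add (Rp_lim ν γ hν hγ T hT)).const_mul (2:ℝ)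
    simpa using this
  have hden : Tendsto (fun d : ℝ =>
      (1 - (Real.sqrt (d ^ 2 + 1 / ν) - (d + γ / ν)) / (Real.sqrt (d ^ 2 + 1 / ν) + (d + γ / ν)) *
          Real.exp (-(2 * (Real.sqrt (d ^ 2 + 1 / ν) * (T - α))))) *
        ((Real.sqrt (d ^ 2 + 1 / ν) + d) + (Real.sqrt (d ^ 2 + 1 / ν) - d) *
          Real.exp (-(2 * (Real.sqrt (d ^ 2 + 1 / ν) * α))))) atTop atTop := by
    apply Tendsto.pos_mul_atTop one_pos
    · have := (tendsto_const_nhds (x := (1:ℝ)) (f := atTop)).sub (Rp_lim ν γ hν hγ (T - α) hTα)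
      simpa using this
    · exact (Tendsto.atTop_add_atTop (sqrtS_tendsto ν hν) tendsto_id).atTop_add (Sd_lim ν α hν hα0)
  refine Tendsto.congr' ?_ (hnum.div_atTop hden)
  filter_upwards [eventually_gt_atTop 0] with d hd
  have hW : 0 < d + γ / ν := by positivity
  rw [show Real.sqrt (d ^ 2 + 1 / ν) * T
      = Real.sqrt (d ^ 2 + 1 / ν) * α + Real.sqrt (d ^ 2 + 1 / ν) * (T - α) from by ring]
  exact (idE _ _ _ _ _ (sqrtS_pos ν hν d) hW hd
    (by positivity) (by positivity)).symm

lemma auxF (hν : 0 < ν) (hγ : 0 ≤ γ) (hT : 0 < T) (hα0 : 0 < α) (hαT : α < T) :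
    Tendsto (fun d : ℝ =>
      (Real.sqrt (d ^ 2 + 1 / ν) * Real.cosh (Real.sqrt (d ^ 2 + 1 / ν) * T) +
        (d + γ / ν) * Real.sinh (Real.sqrt (d ^ 2 + 1 / ν) * T)) /
      ((Real.sqrt (d ^ 2 + 1 / ν) * Real.cosh (Real.sqrt (d ^ 2 + 1 / ν) * (T - α)) +
          (d + γ / ν) * Real.sinh (Real.sqrt (d ^ 2 + 1 / ν) * (T - α))) *
        Real.cosh (Real.sqrt (d ^ 2 + 1 / ν) * α))) atTop (nhds 2) := by
  have hTα : 0 < T - α := by linarith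
  have hnum : Tendsto (fun d : ℝ =>
      2 * (1 + (Real.sqrt (d ^ 2 + 1 / ν) - (d + γ / ν)) / (Real.sqrt (d ^ 2 + 1 / ν) + (d + γ / ν)) *
        Real.exp (-(2 * (Real.sqrt (d ^ 2 + 1 / ν) * T))))) atTop (nhds 2) := by
    have := ((tendsto_const_nhds (x := (1:ℝ)) (f := atTop)).add (Rp_lim ν γ hν hγ T hT)).const_mul (2:ℝ)
    simpa using this
  have hden : Tendsto (fun d : ℝ =>
      (1 + (Real.sqrt (d ^ 2 + 1 / ν) - (d + γ / ν)) / (Real.sqrt (d ^ 2 + 1 / ν) + (d + γ / ν)) *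
          Real.exp (-(2 * (Real.sqrt (d ^ 2 + 1 / ν) * (T - α))))) *
        (1 + Real.exp (-(2 * (Real.sqrt (d ^ 2 + 1 / ν) * α))))) atTop (nhds 1) := by
    have := ((tendsto_const_nhds (x := (1:ℝ)) (f := atTop)).add (Rp_lim ν γ hν hγ (T - α) hTα)).mul
      ((tendsto_const_nhds (x := (1:ℝ)) (f := atTop)).add (exp_lim ν hν α hα0))
    simpa using this
  have hdiv : Tendsto (fun d : ℝ =>
      2 * (1 + (Real.sqrt (d ^ 2 + 1 / ν) - (d + γ / ν)) / (Real.sqrt (d ^ 2 + 1 / ν) + (d + γ / ν)) *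
        Real.exp (-(2 * (Real.sqrt (d ^ 2 + 1 / ν) * T)))) /
      ((1 + (Real.sqrt (d ^ 2 + 1 / ν) - (d + γ / ν)) / (Real.sqrt (d ^ 2 + 1 / ν) + (d + γ / ν)) *
          Real.exp (-(2 * (Real.sqrt (d ^ 2 + 1 / ν) * (T - α))))) *
        (1 + Real.exp (-(2 * (Real.sqrt (d ^ 2 + 1 / ν) * α)))))) atTop (nhds 2) := by
    simpa [Pi.div_def] using hnum.div hden one_ne_zero
  refine Tendsto.congr' ?_ hdiv
  filter_upwards [eventually_gt_atTop 0] with d hd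
  have hW : 0 < d + γ / ν := by positivity
  rw [show Real.sqrt (d ^ 2 + 1 / ν) * T
      = Real.sqrt (d ^ 2 + 1 / ν) * α + Real.sqrt (d ^ 2 + 1 / ν) * (T - α) from by ring]
  exact (idF (Real.sqrt (d ^ 2 + 1 / ν)) (d + γ / ν)
    (Real.sqrt (d ^ 2 + 1 / ν) * α) (Real.sqrt (d ^ 2 + 1 / ν) * (T - α))
    (sqrtS_pos ν hν d) hW
    (by have := sqrtS_pos ν hν d; positivity)
    (by have := sqrtS_pos ν hν d; positivity)).symm


end auxlimits

/-- High-frequency behavior of algorithm NN₁ᵦ: `E(d) → 0`, `F(d) → 2`, hence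
the convergence factor `|1 − θ(E(d) + F(d))| → |1 − 2θ|` as `d → ∞`. -/
theorem stmt9 (ν γ T α θ : ℝ) (hν : 0 < ν) (hγ : 0 ≤ γ) (hT : 0 < T)
    (hα0 : 0 < α) (hαT : α < T)
    (σ ω a b N E F : ℝ → ℝ)
    (hσ : ∀ d, 0 < d → σ d = Real.sqrt (d ^ 2 + 1 / ν))
    (hω : ∀ d, 0 < d → ω d = d + γ / ν)
    (ha : ∀ d, 0 < d → a d = σ d * α)
    (hb : ∀ d, 0 < d → b d = σ d * (T - α))
    (hN : ∀ d, 0 < d → N d = σ d * Real.cosh (σ d * T) + ω d * Real.sinh (σ d * T))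
    (hE : ∀ d, 0 < d → E d = N d /
      ((σ d * Real.sinh (b d) + ω d * Real.cosh (b d)) *
        (σ d * Real.cosh (a d) + d * Real.sinh (a d))))
    (hF : ∀ d, 0 < d → F d = N d /
      ((σ d * Real.cosh (b d) + ω d * Real.sinh (b d)) * Real.cosh (a d))) :
    Tendsto E atTop (nhds 0) ∧
    Tendsto F atTop (nhds 2) ∧
    Tendsto (fun d => |1 - θ * (E d + F d)|) atTop (nhds |1 - 2 * θ|) := by
  have hE' : Tendsto E atTop (nhds 0) := by
    refine Tendsto.congr' ?_ (auxE ν γ T α hν hγ hT hα0 hαT)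
    filter_upwards [eventually_gt_atTop 0] with d hd
    rw [hE d hd, hN d hd, ha d hd, hb d hd, hω d hd, hσ d hd]
  have hF' : Tendsto F atTop (nhds 2) := by
    refine Tendsto.congr' ?_ (auxF ν γ T α hν hγ hT hα0 hαT)
    filter_upwards [eventually_gt_atTop 0] with d hd
    rw [hF d hd, hN d hd, ha d hd, hb d hd, hω d hd, hσ d hd]
  refine ⟨hE', hF', ?_⟩
  have h3 : Tendsto (fun d => 1 - θ * (E d + F d)) atTop (nhds (1 - 2 * θ)) := by
    have := (tendsto_const_nhds (x := (1:ℝ)) (f := atTop)).sub ((hE'.add hF').const_mul θ)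
    have heq : (1:ℝ) - θ * (0 + 2) = 1 - 2 * θ := by ring
    rwa [heq] at this
  exact h3.abs
end

section
/- Fix reals ν > 0, γ ≥ 0, T > 0, 0 < α < T and d ≥ 0. Set σ = √(d² + 1/ν), ω = d + γ/ν, a = σ·α, b = σ·(T − α), N = σ·cosh(σ·T) + ω·sinh(σ·T), E = N / ((σ·sinh b + ω·cosh b)·sinh a) and F = N / ((σ·cosh b + ω·sinh b)·cosh a). Then E + F = 2 + (cosh a / sinh a)·(σ·cosh b + ω·sinh b)/(σ·sinh b + ω·cosh b) + (sinh a / cosh a)·(σ·sinh b + ω·cosh b)/(σ·cosh b + ω·sinh b). -/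
open Real

/-- Identity for the sum `E + F` of the interface quantities of algorithm NN₂ₐ. -/
theorem stmt11 (ν γ T α d : ℝ) (hν : 0 < ν) (hγ : 0 ≤ γ) (hT : 0 < T)
    (hα0 : 0 < α) (hαT : α < T) (hd : 0 ≤ d)
    (σ ω a b N E F : ℝ)
    (hσ : σ = Real.sqrt (d ^ 2 + 1 / ν)) (hω : ω = d + γ / ν)
    (ha : a = σ * α) (hb : b = σ * (T - α))
    (hN : N = σ * Real.cosh (σ * T) + ω * Real.sinh (σ * T))
    (hE : E = N / ((σ * Real.sinh b + ω * Real.cosh b) * Real.sinh a))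
    (hF : F = N / ((σ * Real.cosh b + ω * Real.sinh b) * Real.cosh a)) :
    E + F = 2
      + (Real.cosh a / Real.sinh a) *
          ((σ * Real.cosh b + ω * Real.sinh b) / (σ * Real.sinh b + ω * Real.cosh b))
      + (Real.sinh a / Real.cosh a) *
          ((σ * Real.sinh b + ω * Real.cosh b) / (σ * Real.cosh b + ω * Real.sinh b)) := by
  have hσpos : 0 < σ := by
    rw [hσ]; positivity
  have hωpos : 0 ≤ ω := by
    rw [hω]; positivity
  have hapos : 0 < a := by rw [ha]; positivity
  have hbpos : 0 < b := by
    rw [hb]; have : 0 < T - α := by linarith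
    positivity
  have hsa : 0 < Real.sinh a := Real.sinh_pos_iff.2 hapos
  have hca : 0 < Real.cosh a := Real.cosh_pos a
  have hsb : 0 < Real.sinh b := Real.sinh_pos_iff.2 hbpos
  have hcb : 0 < Real.cosh b := Real.cosh_pos b
  have hP : 0 < σ * Real.sinh b + ω * Real.cosh b := by positivity
  have hQ : 0 < σ * Real.cosh b + ω * Real.sinh b := by positivity
  have hT' : σ * T = a + b := by rw [ha, hb]; ring
  have hN' : N = Real.cosh a * (σ * Real.cosh b + ω * Real.sinh b)
      + Real.sinh a * (σ * Real.sinh b + ω * Real.cosh b) := by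
    rw [hN, hT', Real.cosh_add, Real.sinh_add]; ring
  rw [hE, hF, hN']
  field_simp
  ring
end

section
/- Fix reals ν > 0, γ ≥ 0, T > 0, 0 < α < T and θ ∈ ℝ, and for d > 0 define σ(d) = √(d² + 1/ν), ω(d) = d + γ/ν, a(d) = σ(d)·α, b(d) = σ(d)·(T − α), N(d) = σ(d)·cosh(σ(d)·T) + ω(d)·sinh(σ(d)·T), E(d) = N(d) / ((σ(d)·sinh(b(d)) + ω(d)·cosh(b(d)))·sinh(a(d))) and F(d) = N(d) / ((σ(d)·cosh(b(d)) + ω(d)·sinh(b(d)))·cosh(a(d))). Then E(d) → 2 and F(d) → 2 as d → ∞; consequently |1 − θ·(E(d) + F(d))| → |1 − 4·θ| as d → ∞ (Filter.Tendsto along atTop). -/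
open Real Filter

set_option maxHeartbeats 2000000 in
/-- High-frequency behavior of algorithm NN₂ₐ: `E(d) → 2`, `F(d) → 2`, hence
the convergence factor `|1 − θ(E(d) + F(d))| → |1 − 4θ|` as `d → ∞`. -/
theorem stmt12 (ν γ T α θ : ℝ) (hν : 0 < ν) (hγ : 0 ≤ γ) (hT : 0 < T)
    (hα0 : 0 < α) (hαT : α < T)
    (σ ω a b N E F : ℝ → ℝ)
    (hσ : ∀ d, 0 < d → σ d = Real.sqrt (d ^ 2 + 1 / ν))
    (hω : ∀ d, 0 < d → ω d = d + γ / ν)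
    (ha : ∀ d, 0 < d → a d = σ d * α)
    (hb : ∀ d, 0 < d → b d = σ d * (T - α))
    (hN : ∀ d, 0 < d → N d = σ d * Real.cosh (σ d * T) + ω d * Real.sinh (σ d * T))
    (hE : ∀ d, 0 < d → E d = N d /
      ((σ d * Real.sinh (b d) + ω d * Real.cosh (b d)) * Real.sinh (a d)))
    (hF : ∀ d, 0 < d → F d = N d /
      ((σ d * Real.cosh (b d) + ω d * Real.sinh (b d)) * Real.cosh (a d))) :
    Tendsto E atTop (nhds 2) ∧
    Tendsto F atTop (nhds 2) ∧
    Tendsto (fun d => |1 - θ * (E d + F d)|) atTop (nhds |1 - 4 * θ|) := by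
  have hν' : (0:ℝ) < 1/ν := by positivity
  have hTα : 0 < T - α := by linarith
  -- positivity of sigma, omega
  have hσpos : ∀ d, 0 < d → 0 < σ d := by
    intro d hd; rw [hσ d hd]; positivity
  have hωpos : ∀ d, 0 < d → 0 < ω d := by
    intro d hd; rw [hω d hd]; positivity
  have hσge : ∀ d, 0 < d → d ≤ σ d := by
    intro d hd; rw [hσ d hd, Real.le_sqrt hd.le (by positivity)]; linarith
  have hσtop : Tendsto σ atTop atTop :=
    tendsto_atTop_mono' atTop ((eventually_gt_atTop 0).mono fun d hd => hσge d hd) tendsto_id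
  -- key algebraic identities
  have key : ∀ d, 0 < d →
      E d = ((σ d / d) * (1 + Real.exp (-(σ d * T)) ^ 2)
              + (ω d / d) * (1 - Real.exp (-(σ d * T)) ^ 2)) /
            (((σ d / d) * (1 - Real.exp (-(σ d * (T - α))) ^ 2)
              + (ω d / d) * (1 + Real.exp (-(σ d * (T - α))) ^ 2))
              * (1 - Real.exp (-(σ d * α)) ^ 2) / 2)
      ∧ F d = ((σ d / d) * (1 + Real.exp (-(σ d * T)) ^ 2)
              + (ω d / d) * (1 - Real.exp (-(σ d * T)) ^ 2)) /
            (((σ d / d) * (1 + Real.exp (-(σ d * (T - α))) ^ 2)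
              + (ω d / d) * (1 - Real.exp (-(σ d * (T - α))) ^ 2))
              * (1 + Real.exp (-(σ d * α)) ^ 2) / 2) := by
    intro d hd
    have hσd := hσpos d hd
    have hωd := hωpos d hd
    have hd' : d ≠ 0 := hd.ne'
    have hZ1 : Real.exp (-(σ d * α)) < 1 := by
      rw [Real.exp_lt_one_iff]; nlinarith
    have hY1 : Real.exp (-(σ d * (T - α))) < 1 := by
      rw [Real.exp_lt_one_iff]; nlinarith
    have hZ2 : Real.exp (-(σ d * α)) ^ 2 < 1 :=
      pow_lt_one₀ (Real.exp_pos _).le hZ1 (by norm_num)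
    have hY2 : Real.exp (-(σ d * (T - α))) ^ 2 < 1 :=
      pow_lt_one₀ (Real.exp_pos _).le hY1 (by norm_num)
    have hsinha : 0 < Real.sinh (σ d * α) := Real.sinh_pos_iff.mpr (by positivity)
    have hsinhb : 0 < Real.sinh (σ d * (T - α)) := Real.sinh_pos_iff.mpr (by positivity)
    have hcosha : 0 < Real.cosh (σ d * α) := Real.cosh_pos _
    have hcoshb : 0 < Real.cosh (σ d * (T - α)) := Real.cosh_pos _
    have e1 : Real.exp (σ d * T) = Real.exp (σ d * α) * Real.exp (σ d * (T - α)) := by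
      rw [← Real.exp_add]; congr 1; ring
    have hP : (0:ℝ) < Real.exp (σ d * α) := Real.exp_pos _
    have hQ : (0:ℝ) < Real.exp (σ d * (T - α)) := Real.exp_pos _
    have hDE : (σ d * Real.sinh (b d) + ω d * Real.cosh (b d)) * Real.sinh (a d) ≠ 0 := by
      rw [ha d hd, hb d hd]
      exact (mul_pos (add_pos (mul_pos hσd hsinhb) (mul_pos hωd hcoshb)) hsinha).ne'
    have hDF : (σ d * Real.cosh (b d) + ω d * Real.sinh (b d)) * Real.cosh (a d) ≠ 0 := by
      rw [ha d hd, hb d hd]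
      exact (mul_pos (add_pos (mul_pos hσd hcoshb) (mul_pos hωd hsinhb)) hcosha).ne'
    have hdenE : (((σ d / d) * (1 - Real.exp (-(σ d * (T - α))) ^ 2)
              + (ω d / d) * (1 + Real.exp (-(σ d * (T - α))) ^ 2))
              * (1 - Real.exp (-(σ d * α)) ^ 2) / 2) ≠ 0 := by
      have h1 : 0 < σ d / d := by positivity
      have h2 : 0 < ω d / d := by positivity
      have : 0 < (σ d / d) * (1 - Real.exp (-(σ d * (T - α))) ^ 2)
              + (ω d / d) * (1 + Real.exp (-(σ d * (T - α))) ^ 2) := by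
        have := (Real.exp_pos (-(σ d * (T - α)))).le
        nlinarith [sq_nonneg (Real.exp (-(σ d * (T - α))))]
      have : 0 < (((σ d / d) * (1 - Real.exp (-(σ d * (T - α))) ^ 2)
              + (ω d / d) * (1 + Real.exp (-(σ d * (T - α))) ^ 2))
              * (1 - Real.exp (-(σ d * α)) ^ 2) / 2) := by
        apply div_pos (mul_pos this (by linarith)) two_pos
      exact this.ne'
    have hdenF : (((σ d / d) * (1 + Real.exp (-(σ d * (T - α))) ^ 2)
              + (ω d / d) * (1 - Real.exp (-(σ d * (T - α))) ^ 2))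
              * (1 + Real.exp (-(σ d * α)) ^ 2) / 2) ≠ 0 := by
      have h1 : 0 < σ d / d := by positivity
      have h2 : 0 < ω d / d := by positivity
      have : 0 < (σ d / d) * (1 + Real.exp (-(σ d * (T - α))) ^ 2)
              + (ω d / d) * (1 - Real.exp (-(σ d * (T - α))) ^ 2) := by
        nlinarith [sq_nonneg (Real.exp (-(σ d * (T - α))))]
      have : 0 < (((σ d / d) * (1 + Real.exp (-(σ d * (T - α))) ^ 2)
              + (ω d / d) * (1 - Real.exp (-(σ d * (T - α))) ^ 2))
              * (1 + Real.exp (-(σ d * α)) ^ 2) / 2) := by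
        apply div_pos (mul_pos this (by positivity)) two_pos
      exact this.ne'
    constructor
    · rw [hE d hd, hN d hd, div_eq_div_iff hDE hdenE, ha d hd, hb d hd]
      simp only [Real.sinh_eq, Real.cosh_eq, Real.exp_neg, e1]
      set P := Real.exp (σ d * α) with hPdef
      set Q := Real.exp (σ d * (T - α)) with hQdef
      field_simp
    · rw [hF d hd, hN d hd, div_eq_div_iff hDF hdenF, ha d hd, hb d hd]
      simp only [Real.sinh_eq, Real.cosh_eq, Real.exp_neg, e1]
      set P := Real.exp (σ d * α) with hPdef
      set Q := Real.exp (σ d * (T - α)) with hQdef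
      field_simp
  -- limits of the building blocks
  have hr : Tendsto (fun d => σ d / d) atTop (nhds 1) := by
    have heq : ∀ᶠ d in atTop, Real.sqrt (1 + 1/ν / d^2) = σ d / d := by
      filter_upwards [eventually_gt_atTop (0:ℝ)] with d hd
      rw [hσ d hd, show (1 + 1/ν / d^2) = (d^2 + 1/ν) / d^2 by field_simp,
        Real.sqrt_div (by positivity), Real.sqrt_sq hd.le]
    have hinner : Tendsto (fun d : ℝ => 1 + 1/ν / d^2) atTop (nhds 1) := by
      have := (tendsto_const_nhds (x := 1/ν) (f := atTop (α := ℝ))).div_atTop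
        (tendsto_pow_atTop (n := 2) (by norm_num))
      simpa using (tendsto_const_nhds (x := (1:ℝ))).add this
    have := (Real.continuous_sqrt.tendsto 1).comp hinner
    simp only [Function.comp, Real.sqrt_one] at this
    exact this.congr' heq
  have hs : Tendsto (fun d => ω d / d) atTop (nhds 1) := by
    have heq : ∀ᶠ d in atTop, 1 + (γ/ν) / d = ω d / d := by
      filter_upwards [eventually_gt_atTop (0:ℝ)] with d hd
      rw [hω d hd]; field_simp
    have : Tendsto (fun d : ℝ => 1 + (γ/ν) / d) atTop (nhds 1) := by
      simpa using (tendsto_const_nhds (x := (1:ℝ))).add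
        ((tendsto_const_nhds (x := γ/ν)).div_atTop tendsto_id)
    exact this.congr' heq
  have hexp : ∀ c : ℝ, 0 < c →
      Tendsto (fun d => Real.exp (-(σ d * c))) atTop (nhds 0) := by
    intro c hc
    have h1 : Tendsto (fun d => σ d * c) atTop atTop := hσtop.atTop_mul_const hc
    have h2 : Tendsto (fun d => -(σ d * c)) atTop atBot := tendsto_neg_atBot_iff.mpr h1
    exact Real.tendsto_exp_atBot.comp h2
  have hX2 : Tendsto (fun d => Real.exp (-(σ d * T)) ^ 2) atTop (nhds 0) := by
    simpa using (hexp T hT).pow 2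
  have hY2 : Tendsto (fun d => Real.exp (-(σ d * (T - α))) ^ 2) atTop (nhds 0) := by
    simpa using (hexp (T - α) hTα).pow 2
  have hZ2 : Tendsto (fun d => Real.exp (-(σ d * α)) ^ 2) atTop (nhds 0) := by
    simpa using (hexp α hα0).pow 2
  have hnum : Tendsto (fun d => (σ d / d) * (1 + Real.exp (-(σ d * T)) ^ 2)
              + (ω d / d) * (1 - Real.exp (-(σ d * T)) ^ 2)) atTop (nhds 2) := by
    have h := (hr.mul ((tendsto_const_nhds (x := (1:ℝ))).add hX2)).add
      (hs.mul ((tendsto_const_nhds (x := (1:ℝ))).sub hX2))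
    norm_num at h
    exact h
  have hdenE : Tendsto (fun d => ((σ d / d) * (1 - Real.exp (-(σ d * (T - α))) ^ 2)
              + (ω d / d) * (1 + Real.exp (-(σ d * (T - α))) ^ 2))
              * (1 - Real.exp (-(σ d * α)) ^ 2) / 2) atTop (nhds 1) := by
    have h := (((hr.mul ((tendsto_const_nhds (x := (1:ℝ))).sub hY2)).add
      (hs.mul ((tendsto_const_nhds (x := (1:ℝ))).add hY2))).mul
      ((tendsto_const_nhds (x := (1:ℝ))).sub hZ2)).div_const 2
    norm_num at h
    exact h
  have hdenF : Tendsto (fun d => ((σ d / d) * (1 + Real.exp (-(σ d * (T - α))) ^ 2)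
              + (ω d / d) * (1 - Real.exp (-(σ d * (T - α))) ^ 2))
              * (1 + Real.exp (-(σ d * α)) ^ 2) / 2) atTop (nhds 1) := by
    have h := (((hr.mul ((tendsto_const_nhds (x := (1:ℝ))).add hY2)).add
      (hs.mul ((tendsto_const_nhds (x := (1:ℝ))).sub hY2))).mul
      ((tendsto_const_nhds (x := (1:ℝ))).add hZ2)).div_const 2
    norm_num at h
    exact h
  have hEt : Tendsto E atTop (nhds 2) := by
    have h := hnum.div hdenE one_ne_zero
    norm_num at h
    apply h.congr'
    filter_upwards [eventually_gt_atTop (0:ℝ)] with d hd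
    exact ((key d hd).1).symm
  have hFt : Tendsto F atTop (nhds 2) := by
    have h := hnum.div hdenF one_ne_zero
    norm_num at h
    apply h.congr'
    filter_upwards [eventually_gt_atTop (0:ℝ)] with d hd
    exact ((key d hd).2).symm
  refine ⟨hEt, hFt, ?_⟩
  have h := ((tendsto_const_nhds (x := (1:ℝ))).sub
    ((tendsto_const_nhds (x := θ)).mul (hEt.add hFt))).abs
  convert h using 2
  ring
end

section
/- For all real u > 0 and v > 0, one has coth(u)·coth(v) + tanh(u)·tanh(v) ≥ (coth((u+v)/2))² + (tanh((u+v)/2))², and (coth((u+v)/2))² + (tanh((u+v)/2))² > 2; in particular coth(u)·coth(v) + tanh(u)·tanh(v) > 2. -/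
open Real

lemma stmt13_key (su cu sv cv sw cw : ℝ) (hsu : 0 < su) (hcu : 0 < cu)
    (hsv : 0 < sv) (hcv : 0 < cv) (hsw : 0 < sw) (hcw : 0 < cw)
    (h3 : cw ^ 2 - sw ^ 2 = 1)
    (hB : 1 ≤ cu * cv - su * sv)
    (hA : cu * cv + su * sv = 2 * cw ^ 2 - 1) :
    (cu / su) * (cv / sv) + (su / cu) * (sv / cv)
      ≥ (cw / sw) ^ 2 + (sw / cw) ^ 2 ∧
    (cw / sw) ^ 2 + (sw / cw) ^ 2 > 2 := by
  have hPQ : 0 < su * sv := mul_pos hsu hsv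
  have hP : 0 < cu * cv := mul_pos hcu hcv
  have hsw2 : 0 < sw ^ 2 := by positivity
  have hcw2 : 0 < cw ^ 2 := by positivity
  constructor
  · rw [ge_iff_le, div_mul_div_comm, div_mul_div_comm, div_pow, div_pow,
      div_add_div _ _ (ne_of_gt hsw2) (ne_of_gt hcw2),
      div_add_div _ _ (ne_of_gt hPQ) (ne_of_gt hP),
      div_le_div_iff₀ (by positivity) (by positivity)]
    have key : 0 ≤ (cu * cv + su * sv) ^ 2 * ((cu * cv - su * sv) ^ 2 - 1) := by
      apply mul_nonneg (sq_nonneg _)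
      nlinarith [hB]
    have hsub : sw ^ 2 = cw ^ 2 - 1 := by linarith
    have hc : cw ^ 2 = (cu * cv + su * sv + 1) / 2 := by linarith
    have main : (cu * cv * (cu * cv) + su * sv * (su * sv)) * (sw ^ 2 * cw ^ 2)
        - (cw ^ 2 * cw ^ 2 + sw ^ 2 * sw ^ 2) * (su * sv * (cu * cv))
        = (cu * cv + su * sv) ^ 2 * ((cu * cv - su * sv) ^ 2 - 1) / 4 := by
      rw [hsub, hc]; ring
    linarith [key, main]
  · rw [gt_iff_lt, div_pow, div_pow,
      div_add_div _ _ (ne_of_gt hsw2) (ne_of_gt hcw2),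
      lt_div_iff₀ (by positivity)]
    nlinarith [h3, hsw2, hcw2]

/-- Hyperbolic inequality used in the analysis of algorithm NN₂ₐ with γ = 0:
for `u, v > 0`, writing `coth x = cosh x / sinh x`,
`coth u · coth v + tanh u · tanh v ≥ coth((u+v)/2)² + tanh((u+v)/2)² > 2`. -/
theorem stmt13 (u v : ℝ) (hu : 0 < u) (hv : 0 < v) :
    (Real.cosh u / Real.sinh u) * (Real.cosh v / Real.sinh v)
        + Real.tanh u * Real.tanh v
      ≥ (Real.cosh ((u + v) / 2) / Real.sinh ((u + v) / 2)) ^ 2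
        + Real.tanh ((u + v) / 2) ^ 2 ∧
    (Real.cosh ((u + v) / 2) / Real.sinh ((u + v) / 2)) ^ 2
        + Real.tanh ((u + v) / 2) ^ 2 > 2 ∧
    (Real.cosh u / Real.sinh u) * (Real.cosh v / Real.sinh v)
        + Real.tanh u * Real.tanh v > 2 := by
  set w := (u + v) / 2 with hw
  have hsu := Real.sinh_pos_iff.mpr hu
  have hsv := Real.sinh_pos_iff.mpr hv
  have hsw : 0 < Real.sinh w := Real.sinh_pos_iff.mpr (by positivity)
  have hcu := Real.cosh_pos (x := u)
  have hcv := Real.cosh_pos (x := v)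
  have hcw := Real.cosh_pos (x := w)
  have h3 : Real.cosh w ^ 2 - Real.sinh w ^ 2 = 1 := Real.cosh_sq_sub_sinh_sq w
  have hB : 1 ≤ Real.cosh u * Real.cosh v - Real.sinh u * Real.sinh v := by
    have := Real.one_le_cosh (u - v)
    rwa [Real.cosh_sub] at this
  have hA : Real.cosh u * Real.cosh v + Real.sinh u * Real.sinh v
      = 2 * Real.cosh w ^ 2 - 1 := by
    have h1 : Real.cosh (u + v) = Real.cosh u * Real.cosh v + Real.sinh u * Real.sinh v :=
      Real.cosh_add u v
    have h2 : Real.cosh (2 * w) = 2 * Real.cosh w ^ 2 - 1 := by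
      have := Real.cosh_two_mul w
      have h4 := Real.cosh_sq_sub_sinh_sq w
      linarith
    have : (2 : ℝ) * w = u + v := by rw [hw]; ring
    rw [this] at h2
    linarith
  have key := stmt13_key (Real.sinh u) (Real.cosh u) (Real.sinh v) (Real.cosh v)
    (Real.sinh w) (Real.cosh w) hsu hcu hsv hcv hsw hcw h3 hB hA
  rw [Real.tanh_eq_sinh_div_cosh, Real.tanh_eq_sinh_div_cosh, Real.tanh_eq_sinh_div_cosh]
  refine ⟨key.1, key.2, lt_of_lt_of_le key.2 ?_⟩
  exact key.1
end

section
/- Fix reals ν > 0, γ ≥ 0, T > 0 and 0 < α < T, and set σ₀ = √(1/ν), c_a = coth(σ₀·α), c_b = coth(σ₀·(T − α)), t_a = tanh(σ₀·α), t_b = tanh(σ₀·(T − α)). Define θ* = 2 / (6 + c_a·(c_b + γ·σ₀)/(1 + γ·σ₀·c_b) + t_a·(t_b + γ·σ₀)/(1 + γ·σ₀·t_b)). Then 0 < θ* < 1/3, and if γ = 0 then θ* < 1/4. -/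
open Real

lemma stmt14_aux (x y : ℝ) (hx : 1 < x) (hy : 0 < y) (h : y * x = 1) :
    2 < x + y := by
  nlinarith [mul_pos (sub_pos.mpr hx) (sub_pos.mpr hx)]

/-- The equioscillated relaxation parameter of algorithm NN₂ₐ satisfies
`0 < θ* < 1/3`, and `θ* < 1/4` when γ = 0. Here `coth x = cosh x / sinh x`. -/
theorem stmt14 (ν γ T α : ℝ) (hν : 0 < ν) (hγ : 0 ≤ γ) (hT : 0 < T)
    (hα0 : 0 < α) (hαT : α < T)
    (σ₀ ca cb ta tb θs : ℝ)
    (hσ₀ : σ₀ = Real.sqrt (1 / ν))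
    (hca : ca = Real.cosh (σ₀ * α) / Real.sinh (σ₀ * α))
    (hcb : cb = Real.cosh (σ₀ * (T - α)) / Real.sinh (σ₀ * (T - α)))
    (hta : ta = Real.tanh (σ₀ * α)) (htb : tb = Real.tanh (σ₀ * (T - α)))
    (hθ : θs = 2 / (6 + ca * (cb + γ * σ₀) / (1 + γ * σ₀ * cb)
      + ta * (tb + γ * σ₀) / (1 + γ * σ₀ * tb))) :
    0 < θs ∧ θs < 1 / 3 ∧ (γ = 0 → θs < 1 / 4) := by
  have hσ : 0 < σ₀ := by
    rw [hσ₀]; exact Real.sqrt_pos.mpr (by positivity)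
  have hu : 0 < σ₀ * α := by positivity
  have hv : 0 < σ₀ * (T - α) := by
    have : 0 < T - α := by linarith
    positivity
  have hsa : 0 < Real.sinh (σ₀ * α) := Real.sinh_pos_iff.mpr hu
  have hsb : 0 < Real.sinh (σ₀ * (T - α)) := Real.sinh_pos_iff.mpr hv
  have hcau : Real.sinh (σ₀ * α) < Real.cosh (σ₀ * α) := Real.sinh_lt_cosh _
  have hcbu : Real.sinh (σ₀ * (T - α)) < Real.cosh (σ₀ * (T - α)) :=
    Real.sinh_lt_cosh _
  have hca1 : 1 < ca := by rw [hca]; exact (one_lt_div hsa).mpr hcau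
  have hcb1 : 1 < cb := by rw [hcb]; exact (one_lt_div hsb).mpr hcbu
  have hcpa : 0 < Real.cosh (σ₀ * α) := Real.cosh_pos _
  have hcpb : 0 < Real.cosh (σ₀ * (T - α)) := Real.cosh_pos _
  have hta0 : 0 < ta := by
    rw [hta, Real.tanh_eq_sinh_div_cosh]; positivity
  have htb0 : 0 < tb := by
    rw [htb, Real.tanh_eq_sinh_div_cosh]; positivity
  have hta1 : ta < 1 := by
    rw [hta, Real.tanh_eq_sinh_div_cosh]; exact (div_lt_one hcpa).mpr hcau
  have htb1 : tb < 1 := by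
    rw [htb, Real.tanh_eq_sinh_div_cosh]; exact (div_lt_one hcpb).mpr hcbu
  have htca : ta * ca = 1 := by
    rw [hta, hca, Real.tanh_eq_sinh_div_cosh]
    field_simp
  have htcb : tb * cb = 1 := by
    rw [htb, hcb, Real.tanh_eq_sinh_div_cosh]
    field_simp
  have hmb : 0 ≤ γ * σ₀ * cb :=
    mul_nonneg (mul_nonneg hγ hσ.le) (by linarith)
  have hmt : 0 ≤ γ * σ₀ * tb :=
    mul_nonneg (mul_nonneg hγ hσ.le) htb0.le
  have hd1 : 0 < 1 + γ * σ₀ * cb := by linarith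
  have hd2 : 0 < 1 + γ * σ₀ * tb := by linarith
  have hA : 0 < ca * (cb + γ * σ₀) / (1 + γ * σ₀ * cb) := by
    apply div_pos _ hd1; nlinarith
  have hB : 0 < ta * (tb + γ * σ₀) / (1 + γ * σ₀ * tb) := by
    apply div_pos _ hd2; nlinarith
  set D := 6 + ca * (cb + γ * σ₀) / (1 + γ * σ₀ * cb)
      + ta * (tb + γ * σ₀) / (1 + γ * σ₀ * tb) with hD
  have hD6 : 6 < D := by rw [hD]; linarith
  have hDpos : 0 < D := by linarith
  refine ⟨by rw [hθ]; positivity, ?_, ?_⟩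
  · rw [hθ, div_lt_div_iff₀ hDpos (by norm_num)]
    linarith
  · intro hγ0
    have hcc : 1 < ca * cb := by nlinarith
    have hsum : 2 < ca * cb + ta * tb := by
      have hprod : ta * tb * (ca * cb) = 1 := by
        calc ta * tb * (ca * cb) = (ta * ca) * (tb * cb) := by ring
        _ = 1 := by rw [htca, htcb]; ring
      exact stmt14_aux (ca * cb) (ta * tb) hcc (mul_pos hta0 htb0) hprod
    have hDe : D = 6 + ca * cb + ta * tb := by
      rw [hD, hγ0]; simp
    have hD8 : 8 < D := by rw [hDe]; linarith
    rw [hθ, div_lt_div_iff₀ hDpos (by norm_num)]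
    linarith
end

section
/- Fix reals ν > 0, γ ≥ 0, T > 0, 0 < α < T and d ≥ 0. Set σ = √(d² + 1/ν), ω = d + γ/ν, β = 1 − γ·d, a = σ·α, b = σ·(T − α). Then (σ·γ·sinh b + β·cosh b)·sinh a − ν·(σ·cosh b + ω·sinh b)·(σ·sinh a + d·cosh a) = −ν·d·(σ·cosh(σ·T) + ω·sinh(σ·T)). -/
open Real

/-- Key algebraic identity in the proof of divergence of algorithm NN₂ᵦ. -/
theorem stmt15 (ν γ T α d : ℝ) (hν : 0 < ν) (hγ : 0 ≤ γ) (hT : 0 < T)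
    (hα0 : 0 < α) (hαT : α < T) (hd : 0 ≤ d)
    (σ ω β a b : ℝ)
    (hσ : σ = Real.sqrt (d ^ 2 + 1 / ν)) (hω : ω = d + γ / ν) (hβ : β = 1 - γ * d)
    (ha : a = σ * α) (hb : b = σ * (T - α)) :
    (σ * γ * Real.sinh b + β * Real.cosh b) * Real.sinh a
      - ν * (σ * Real.cosh b + ω * Real.sinh b) * (σ * Real.sinh a + d * Real.cosh a)
      = -(ν * d * (σ * Real.cosh (σ * T) + ω * Real.sinh (σ * T))) := by
  have hν' : ν ≠ 0 := ne_of_gt hν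
  have hσ2 : σ ^ 2 = d ^ 2 + 1 / ν := by
    rw [hσ, Real.sq_sqrt]
    positivity
  have hσ2' : ν * σ ^ 2 = ν * d ^ 2 + 1 := by
    rw [hσ2]; field_simp
  have hab : σ * T = a + b := by rw [ha, hb]; ring
  have hωγ : ν * ω = ν * d + γ := by rw [hω]; field_simp
  rw [hab, Real.cosh_add, Real.sinh_add, hβ]
  linear_combination (- Real.cosh b * Real.sinh a) * hσ2'
    + (- Real.sinh b * Real.sinh a * σ + d * Real.cosh b * Real.sinh a) * hωγ
end

section
/- Fix reals ν > 0, γ ≥ 0, T > 0, 0 < α < T and θ > 0. For d ≥ 0 define σ(d) = √(d² + 1/ν), ω(d) = d + γ/ν, β(d) = 1 − γ·d, a(d) = σ(d)·α, b(d) = σ(d)·(T − α), N(d) = σ(d)·cosh(σ(d)·T) + ω(d)·sinh(σ(d)·T), E(d) = N(d) / ((σ(d)·γ·sinh(b(d)) + β(d)·cosh(b(d)))·sinh(a(d))) and F(d) = N(d) / ((σ(d)·cosh(b(d)) + ω(d)·sinh(b(d)))·(σ(d)·sinh(a(d)) + d·cosh(a(d)))). Then F(0) − ν·E(0) = 0,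 and the function d ↦ 1 − θ·d·(F(d) − ν·E(d)) tends to +∞ as d → ∞ (Filter.Tendsto along atTop to atTop). In particular the convergence factor |1 − θ·d·(F(d) − ν·E(d))| of algorithm NN₂ᵦ equals 1 at d = 0 and is unbounded for large d, so NN₂ᵦ diverges. -/
set_option maxHeartbeats 1000000

open Real Filter

private lemma sinh_le_cosh' (x : ℝ) : Real.sinh x ≤ Real.cosh x := by
  rw [Real.sinh_eq, Real.cosh_eq]
  have := Real.exp_pos (-x)
  linarith

private lemma sinh_nonneg' {x : ℝ} (hx : 0 ≤ x) : 0 ≤ Real.sinh x :=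
  Real.sinh_nonneg_iff.mpr hx

/-- Divergence of algorithm NN₂ᵦ: the quantity `F − ν·E` vanishes at `d = 0`
(so the convergence factor equals 1 there), and `1 − θ·d·(F(d) − ν·E(d)) → +∞`
as `d → ∞`. -/
theorem stmt16 (ν γ T α θ : ℝ) (hν : 0 < ν) (hγ : 0 ≤ γ) (hT : 0 < T)
    (hα0 : 0 < α) (hαT : α < T) (hθ : 0 < θ)
    (σ ω β a b N E F : ℝ → ℝ)
    (hσ : ∀ d, 0 ≤ d → σ d = Real.sqrt (d ^ 2 + 1 / ν))
    (hω : ∀ d, 0 ≤ d → ω d = d + γ / ν)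
    (hβ : ∀ d, 0 ≤ d → β d = 1 - γ * d)
    (ha : ∀ d, 0 ≤ d → a d = σ d * α)
    (hb : ∀ d, 0 ≤ d → b d = σ d * (T - α))
    (hN : ∀ d, 0 ≤ d → N d = σ d * Real.cosh (σ d * T) + ω d * Real.sinh (σ d * T))
    (hE : ∀ d, 0 ≤ d → E d = N d /
      ((σ d * γ * Real.sinh (b d) + β d * Real.cosh (b d)) * Real.sinh (a d)))
    (hF : ∀ d, 0 ≤ d → F d = N d /
      ((σ d * Real.cosh (b d) + ω d * Real.sinh (b d)) *
        (σ d * Real.sinh (a d) + d * Real.cosh (a d)))) :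
    F 0 - ν * E 0 = 0 ∧
    Tendsto (fun d => 1 - θ * d * (F d - ν * E d)) atTop atTop := by
  have hν' : ν ≠ 0 := ne_of_gt hν
  constructor
  · -- value at d = 0
    rw [hF 0 le_rfl, hE 0 le_rfl, hσ 0 le_rfl, hω 0 le_rfl, hβ 0 le_rfl]
    set s : ℝ := Real.sqrt ((0:ℝ) ^ 2 + 1 / ν) with hs
    have hs2 : s ^ 2 = 1 / ν := by
      rw [hs, Real.sq_sqrt (by positivity)]; ring
    have hνs : ν * s ^ 2 = 1 := by rw [hs2]; field_simp
    have hD2 : (s * γ * Real.sinh (b 0) + (1 - γ * 0) * Real.cosh (b 0)) * Real.sinh (a 0)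
        = ν * ((s * Real.cosh (b 0) + (0 + γ / ν) * Real.sinh (b 0)) *
          (s * Real.sinh (a 0) + 0 * Real.cosh (a 0))) := by
      field_simp
      linear_combination (-(Real.cosh (b 0) * Real.sinh (a 0))) * hνs
    rw [hD2, ← mul_div_assoc, mul_div_mul_left _ _ hν', sub_self]
  · -- divergence as d → ∞
    have h2 : Tendsto (fun d : ℝ => 1 + θ * ν / 4 * d ^ 2) atTop atTop := by
      apply tendsto_atTop_add_const_left
      exact Tendsto.const_mul_atTop (by positivity)
        (tendsto_pow_atTop (by norm_num))
    refine tendsto_atTop_mono' atTop ?_ h2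
    filter_upwards [eventually_ge_atTop 1, eventually_ge_atTop (1 / T),
      eventually_ge_atTop (γ / ν), eventually_ge_atTop (2 * γ / (T - α) ^ 2),
      eventually_ge_atTop (24 / ν)] with d hd1 hd2 hd3 hd4 hd5
    have hTα : 0 < T - α := by linarith
    have hd0 : (0:ℝ) ≤ d := by linarith
    have hdpos : (0:ℝ) < d := by linarith
    set s : ℝ := Real.sqrt (d ^ 2 + 1 / ν) with hs
    have hσd : σ d = s := hσ d hd0
    have hωval : ω d = d + γ / ν := hω d hd0
    have hβval : β d = 1 - γ * d := hβ d hd0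
    have haval : a d = σ d * α := ha d hd0
    have hbval : b d = σ d * (T - α) := hb d hd0
    have hNval0 : N d = σ d * Real.cosh (σ d * T) + ω d * Real.sinh (σ d * T) := hN d hd0
    have hEval0 : E d = N d /
      ((σ d * γ * Real.sinh (b d) + β d * Real.cosh (b d)) * Real.sinh (a d)) := hE d hd0
    have hFval0 : F d = N d /
      ((σ d * Real.cosh (b d) + ω d * Real.sinh (b d)) *
        (σ d * Real.sinh (a d) + d * Real.cosh (a d))) := hF d hd0
    have hγν : γ ≤ ν * d := by
      have := (div_le_iff₀ hν).mp hd3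
      linarith
    have hγνd : γ / ν ≤ d := hd3
    have hTd : 1 ≤ d * T := by
      have := (div_le_iff₀ hT).mp hd2
      linarith
    have h2γ : 2 * γ ≤ d * (T - α) ^ 2 := by
      have := (div_le_iff₀ (by positivity : (0:ℝ) < (T - α) ^ 2)).mp hd4
      linarith
    have h24 : 24 ≤ ν * d := by
      have := (div_le_iff₀ hν).mp hd5
      linarith
    clear hσ hω hβ ha hb hN hE hF h2 hd2 hd3 hd4 hd5
    have hs2 : s ^ 2 = d ^ 2 + 1 / ν := Real.sq_sqrt (by positivity)
    have hνs2 : ν * s ^ 2 = ν * d ^ 2 + 1 := by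
      rw [hs2]; field_simp
    have hs0 : 0 < s := Real.sqrt_pos.mpr (by positivity)
    have hds : d ≤ s := by
      rw [hs]
      exact Real.le_sqrt_of_sq_le (by linarith [one_div_pos.mpr hν])
    -- γ (s - d) ≤ 1
    have hsd1 : γ * (s - d) ≤ 1 := by
      linarith only [mul_le_mul_of_nonneg_right hγν (sub_nonneg.mpr hds),
        mul_nonneg (mul_nonneg hν.le hs0.le) (sub_nonneg.mpr hds), hνs2]
    set A : ℝ := a d with hA
    set B : ℝ := b d with hB
    have hAval : A = s * α := by rw [haval, hσd]
    have hBval : B = s * (T - α) := by rw [hbval, hσd]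
    have hA0 : 0 < A := by rw [hAval]; exact mul_pos hs0 hα0
    have hB0 : 0 < B := by rw [hBval]; exact mul_pos hs0 hTα
    have hAB : A + B = s * T := by rw [hAval, hBval]; ring
    have hBd : d * (T - α) ≤ B := by
      rw [hBval]; exact mul_le_mul_of_nonneg_right hds hTα.le
    have hcoshAB : Real.cosh (s * T)
        = Real.cosh A * Real.cosh B + Real.sinh A * Real.sinh B := by
      rw [← hAB, Real.cosh_add]
    set Sa : ℝ := Real.sinh A with hSa'
    set Ca : ℝ := Real.cosh A with hCa'
    set Sb : ℝ := Real.sinh B with hSb'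
    set Cb : ℝ := Real.cosh B with hCb'
    set St : ℝ := Real.sinh (s * T) with hSt'
    set Ct : ℝ := Real.cosh (s * T) with hCt'
    have hSa0 : 0 < Sa := Real.sinh_pos_iff.mpr hA0
    have hSb0 : 0 < Sb := Real.sinh_pos_iff.mpr hB0
    have hCa0 : 0 < Ca := Real.cosh_pos A
    have hCb0 : 0 < Cb := Real.cosh_pos B
    have hCt0 : 0 < Ct := Real.cosh_pos (s * T)
    have hSaCa : Sa ≤ Ca := sinh_le_cosh' A
    have hSbCb : Sb ≤ Cb := sinh_le_cosh' B
    have hStCt : St ≤ Ct := sinh_le_cosh' (s * T)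
    have hSt0 : 0 ≤ St := sinh_nonneg' (mul_nonneg hs0.le hT.le)
    -- exp facts for B
    have hexpB : Real.exp (-B) = Cb - Sb := by
      rw [hSb', hCb', Real.sinh_eq, Real.cosh_eq]; ring
    have hexpBpos : 0 < Real.exp (-B) := Real.exp_pos _
    have hexpBmul : Real.exp B * Real.exp (-B) = 1 := by
      rw [← Real.exp_add]; simp
    have he2B : 2 * γ * d ≤ Real.exp B * Real.exp B := by
      have h1 : d * (T - α) ≤ Real.exp B := by
        have := Real.add_one_le_exp B
        linarith
      have hkey : 2 * γ * d ≤ (d * (T - α)) * (d * (T - α)) := by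
        linarith only [mul_le_mul_of_nonneg_right h2γ hd0]
      exact le_trans hkey
        (mul_le_mul h1 h1 (mul_nonneg hd0 hTα.le) (Real.exp_pos B).le)
    -- the E-denominator coefficient
    set C : ℝ := s * γ * Sb + (1 - γ * d) * Cb with hC
    have hC_pos : 0 < C := by
      have h1 : 2 * γ * d * Real.exp (-B) ≤ Real.exp B := by
        calc 2 * γ * d * Real.exp (-B)
            ≤ Real.exp B * Real.exp B * Real.exp (-B) :=
              mul_le_mul_of_nonneg_right he2B hexpBpos.le
          _ = Real.exp B * (Real.exp B * Real.exp (-B)) := by ring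
          _ = Real.exp B := by rw [hexpBmul]; ring
      have hCbexp : Cb = (Real.exp B + Real.exp (-B)) / 2 := Real.cosh_eq B
      have h3 : γ * d * Sb ≤ γ * s * Sb :=
        mul_le_mul_of_nonneg_right (mul_le_mul_of_nonneg_left hds hγ) hSb0.le
      have h4 : γ * d * Real.exp (-B) = γ * d * Cb - γ * d * Sb := by
        rw [hexpB]; ring
      linarith only [h1, h3, h4, hCbexp, hexpBpos, hC]
    have hC_ub : C ≤ 2 * Cb := by
      have h1 : s * Sb - d * Cb ≤ (s - d) * Cb := by
        linarith only [mul_le_mul_of_nonneg_left hSbCb hs0.le]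
      linarith only [mul_le_mul_of_nonneg_left h1 hγ,
        mul_le_mul_of_nonneg_right hsd1 hCb0.le, hCb0, hC]
    -- bounds relating products of cosh/sinh to cosh (sT)
    have hCaCb_ub : Ca * Cb ≤ Ct := by
      linarith only [hcoshAB, mul_pos hSa0 hSb0]
    have hCaCb_lb : Ct ≤ 2 * (Ca * Cb) := by
      linarith only [hcoshAB, mul_le_mul hSaCa hSbCb hSb0.le hCa0.le]
    -- sinh (sT) ≥ cosh (sT) / 2  (since sT ≥ 1)
    have hSt_lb : Ct / 2 ≤ St := by
      have hsT1 : 1 ≤ s * T := by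
        linarith only [hTd, mul_le_mul_of_nonneg_right hds hT.le]
      have h1 : 2 ≤ Real.exp (s * T) := by
        have := Real.add_one_le_exp (s * T); linarith
      have h2 : Real.exp (s * T) * Real.exp (-(s * T)) = 1 := by
        rw [← Real.exp_add]; simp
      have h3 : Ct = (Real.exp (s * T) + Real.exp (-(s * T))) / 2 := Real.cosh_eq _
      have h4 : St = (Real.exp (s * T) - Real.exp (-(s * T))) / 2 := Real.sinh_eq _
      have h5 : 2 * Real.exp (-(s * T)) ≤ Real.exp (s * T) * Real.exp (-(s * T)) :=
        mul_le_mul_of_nonneg_right h1 (Real.exp_pos _).le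
      linarith only [h1, h2, h3, h4, h5, Real.exp_pos (-(s * T))]
    -- N bounds
    have hNval : N d = s * Ct + ω d * St := by
      rw [hNval0, hσd]
    have hω_lb : d ≤ ω d := by
      rw [hωval]
      have : 0 ≤ γ / ν := by positivity
      linarith
    have hω0 : 0 ≤ ω d := le_trans hd0 hω_lb
    have hω_ub : ω d ≤ 2 * s := by
      rw [hωval]
      linarith only [hγνd, hds]
    have hN_lb : 2 * d * St ≤ N d := by
      rw [hNval]
      linarith only [mul_le_mul_of_nonneg_right hds hCt0.le,
        mul_le_mul_of_nonneg_left hStCt hd0,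
        mul_le_mul_of_nonneg_right hω_lb hSt0]
    have hN_ub : N d ≤ 3 * s * Ct := by
      rw [hNval]
      linarith only [mul_le_mul_of_nonneg_left hStCt hω0,
        mul_le_mul_of_nonneg_right hω_ub hCt0.le]
    have hN0 : 0 ≤ N d := by
      linarith only [hN_lb, mul_nonneg (mul_nonneg (by norm_num : (0:ℝ) ≤ 2) hd0) hSt0]
    -- E lower bound : d / 2 ≤ E d
    have hEval : E d = N d / (C * Sa) := by
      rw [hEval0, hσd, hβval]
    have hDE_pos : 0 < C * Sa := mul_pos hC_pos hSa0
    have hDE_ub : C * Sa ≤ 2 * Ct := by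
      linarith only [mul_le_mul_of_nonneg_right hC_ub hSa0.le,
        mul_le_mul_of_nonneg_left hSaCa (by linarith only [hCb0] : (0:ℝ) ≤ 2 * Cb),
        hCaCb_ub]
    have hE_eq : E d * (C * Sa) = N d := by
      rw [hEval]; exact div_mul_cancel₀ _ hDE_pos.ne'
    have hE0 : 0 ≤ E d := by
      rw [hEval]; exact div_nonneg hN0 hDE_pos.le
    have hE_lb : d / 2 ≤ E d := by
      nlinarith only [mul_le_mul_of_nonneg_left hDE_ub hE0, hE_eq, hN_lb,
        mul_le_mul_of_nonneg_left hSt_lb hd0, hCt0]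
    -- F upper bound : F d * d ≤ 6
    set DF : ℝ := (s * Cb + ω d * Sb) * (s * Sa + d * Ca) with hDF
    have hFval : F d = N d / DF := by
      rw [hFval0, hσd]
    have hDF_lb : s * d * Ct / 2 ≤ DF := by
      rw [hDF]
      linarith only [mul_le_mul_of_nonneg_left hCaCb_lb (mul_nonneg hs0.le hd0),
        mul_nonneg (mul_nonneg hs0.le hs0.le) (mul_nonneg hCb0.le hSa0.le),
        mul_nonneg (mul_nonneg hω0 hs0.le) (mul_nonneg hSb0.le hSa0.le),
        mul_nonneg (mul_nonneg hω0 hd0) (mul_nonneg hSb0.le hCa0.le)]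
    have hDF_pos : 0 < DF := by
      linarith only [hDF_lb, mul_pos (mul_pos hs0 hdpos) hCt0]
    have hF_eq : F d * DF = N d := by
      rw [hFval]; exact div_mul_cancel₀ _ hDF_pos.ne'
    have hF0 : 0 ≤ F d := by
      rw [hFval]; exact div_nonneg hN0 hDF_pos.le
    have hF_bd : F d * d ≤ 6 := by
      have h1 : F d * (s * d * Ct / 2) ≤ F d * DF :=
        mul_le_mul_of_nonneg_left hDF_lb hF0
      rw [hF_eq] at h1
      nlinarith only [h1, hN_ub, mul_pos hs0 hCt0, hF0]
    -- conclude
    have hνd2 : 24 ≤ ν * d ^ 2 := by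
      linarith only [h24,
        mul_nonneg (mul_nonneg hν.le hd0) (sub_nonneg.mpr hd1)]
    show 1 + θ * ν / 4 * d ^ 2 ≤ 1 - θ * d * (F d - ν * E d)
    linarith only [
      mul_le_mul_of_nonneg_left hE_lb
        (by positivity : (0:ℝ) ≤ θ * ν * d),
      mul_le_mul_of_nonneg_left hF_bd hθ.le,
      mul_le_mul_of_nonneg_left hνd2 hθ.le]
end

section
/- Fix reals ν > 0, γ ≥ 0, T > 0, 0 < α < T and θ > 0. For d ≥ 0 define σ(d) = √(d² + 1/ν), ω(d) = d + γ/ν, β(d) = 1 − γ·d, a(d) = σ(d)·α, b(d) = σ(d)·(T − α), N(d) = σ(d)·cosh(σ(d)·T) + ω(d)·sinh(σ(d)·T), E(d) = N(d) / ((σ(d)·sinh(b(d)) + ω(d)·cosh(b(d)))·(σ(d)·cosh(a(d)) + d·sinh(a(d)))) and F(d) = N(d) / ((σ(d)·γ·cosh(b(d)) + β(d)·sinh(b(d)))·cosh(a(d))). Then for every d ≥ 0 one has the identity (σ(d)·γ·cosh(b(d)) + β(d)·sinh(b(d)))·cosh(a(d)) − ν·(σ(d)·sinh(b(d)) + ω(d)·cosh(b(d)))·(σ(d)·cosh(a(d))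 + d·sinh(a(d))) = −ν·d·N(d), and the function d ↦ 1 − θ·d·(E(d) − ν·F(d)) tends to +∞ as d → ∞ (Filter.Tendsto along atTop to atTop); so algorithm NN₃ᵦ diverges. -/
open Real Filter

private lemma cosh_le_two_sinh_aux {x : ℝ} (hx : 1 ≤ x) : Real.cosh x ≤ 2 * Real.sinh x := by
  rw [Real.cosh_eq, Real.sinh_eq]
  have h1 : Real.exp 1 ≤ Real.exp x := Real.exp_le_exp.2 hx
  have h2 : Real.exp (-x) ≤ Real.exp (-1) := Real.exp_le_exp.2 (by linarith)
  have h3 : (2.7 : ℝ) < Real.exp 1 := by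
    have := Real.exp_one_gt_d9; linarith
  have h4 : Real.exp (-1) * Real.exp 1 = 1 := by
    rw [← Real.exp_add]; norm_num
  have h5 : Real.exp (-1) < 0.4 := by
    nlinarith [Real.exp_pos (-1)]
  have h6 : 0 < Real.exp (-x) := Real.exp_pos _
  linarith

set_option maxHeartbeats 1000000 in
/-- Divergence of algorithm NN₃ᵦ: the key denominator identity holds for all
`d ≥ 0`, and `1 − θ·d·(E(d) − ν·F(d)) → +∞` as `d → ∞`. -/
theorem stmt17 (ν γ T α θ : ℝ) (hν : 0 < ν) (hγ : 0 ≤ γ) (hT : 0 < T)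
    (hα0 : 0 < α) (hαT : α < T) (hθ : 0 < θ)
    (σ ω β a b N E F : ℝ → ℝ)
    (hσ : ∀ d, 0 ≤ d → σ d = Real.sqrt (d ^ 2 + 1 / ν))
    (hω : ∀ d, 0 ≤ d → ω d = d + γ / ν)
    (hβ : ∀ d, 0 ≤ d → β d = 1 - γ * d)
    (ha : ∀ d, 0 ≤ d → a d = σ d * α)
    (hb : ∀ d, 0 ≤ d → b d = σ d * (T - α))
    (hN : ∀ d, 0 ≤ d → N d = σ d * Real.cosh (σ d * T) + ω d * Real.sinh (σ d * T))
    (hE : ∀ d, 0 ≤ d → E d = N d /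
      ((σ d * Real.sinh (b d) + ω d * Real.cosh (b d)) *
        (σ d * Real.cosh (a d) + d * Real.sinh (a d))))
    (hF : ∀ d, 0 ≤ d → F d = N d /
      ((σ d * γ * Real.cosh (b d) + β d * Real.sinh (b d)) * Real.cosh (a d))) :
    (∀ d, 0 ≤ d →
      (σ d * γ * Real.cosh (b d) + β d * Real.sinh (b d)) * Real.cosh (a d)
        - ν * (σ d * Real.sinh (b d) + ω d * Real.cosh (b d)) *
            (σ d * Real.cosh (a d) + d * Real.sinh (a d))
        = -(ν * d * N d)) ∧
    Tendsto (fun d => 1 - θ * d * (E d - ν * F d)) atTop atTop := by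
  have hcs2 : ∀ d : ℝ, 0 ≤ d → σ d ^ 2 = d ^ 2 + 1 / ν := by
    intro d hd
    rw [hσ d hd]
    exact Real.sq_sqrt (by positivity)
  have hspos : ∀ d : ℝ, 0 ≤ d → 0 < σ d := by
    intro d hd
    rw [hσ d hd]
    exact Real.sqrt_pos.2 (by positivity)
  have key : ∀ d, 0 ≤ d →
      (σ d * γ * Real.cosh (b d) + β d * Real.sinh (b d)) * Real.cosh (a d)
        - ν * (σ d * Real.sinh (b d) + ω d * Real.cosh (b d)) *
            (σ d * Real.cosh (a d) + d * Real.sinh (a d))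
        = -(ν * d * N d) := by
    intro d hd
    have h2 := hcs2 d hd
    rw [hN d hd, hω d hd, hβ d hd, ha d hd, hb d hd]
    have hTsum : σ d * T = σ d * α + σ d * (T - α) := by ring
    rw [hTsum, Real.cosh_add, Real.sinh_add]
    have hinv : ν * ν⁻¹ = 1 := mul_inv_cancel₀ hν.ne'
    linear_combination (-(ν * Real.sinh (σ d * (T - α)) * Real.cosh (σ d * α))) * h2 +
      (-(σ d * γ * Real.cosh (σ d * (T - α)) * Real.cosh (σ d * α)
        - γ * d * Real.sinh (σ d * (T - α)) * Real.cosh (σ d * α)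
        + Real.sinh (σ d * (T - α)) * Real.cosh (σ d * α))) * hinv
  refine ⟨key, ?_⟩
  have hc : (0:ℝ) < θ * ν / (8 * (2 * γ + 1)) := by positivity
  have hg : Tendsto (fun d : ℝ => 1 + θ * ν / (8 * (2 * γ + 1)) * d) atTop atTop :=
    tendsto_atTop_add_const_left atTop 1 (tendsto_id.const_mul_atTop hc)
  refine tendsto_atTop_mono' atTop ?_ hg
  filter_upwards [eventually_ge_atTop (1 + 1 / T + 1 / Real.sqrt ν)] with d hdD
  have hT' : 0 < 1 / T := by positivity
  have hsν : 0 < Real.sqrt ν := Real.sqrt_pos.2 hν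
  have hν' : 0 < 1 / Real.sqrt ν := by positivity
  have hd1 : 1 ≤ d := by linarith
  have hd0 : 0 ≤ d := by linarith
  have hdpos : 0 < d := by linarith
  have hdT : 1 / T ≤ d := by linarith
  have hdν : 1 / Real.sqrt ν ≤ d := by linarith
  have hd2ν : 1 / ν ≤ d ^ 2 := by
    have h := pow_le_pow_left₀ hν'.le hdν 2
    have h2 : (1 / Real.sqrt ν) ^ 2 = 1 / ν := by
      rw [div_pow, one_pow, Real.sq_sqrt hν.le]
    linarith only [h, h2.ge, h2.le]
  have hs2 : σ d ^ 2 = d ^ 2 + 1 / ν := hcs2 d hd0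
  have hsp : 0 < σ d := hspos d hd0
  have h1ν : 0 < 1 / ν := by positivity
  have hsd : d < σ d := by
    have h : d ^ 2 < σ d ^ 2 := by rw [hs2]; linarith only [h1ν]
    exact lt_of_pow_lt_pow_left₀ 2 hsp.le h
  have hs2d : σ d ≤ 2 * d := by
    have h : σ d ^ 2 ≤ (2 * d) ^ 2 := by
      have : (2 * d) ^ 2 = 4 * d ^ 2 := by ring
      rw [hs2, this]; linarith only [hd2ν, sq_nonneg d]
    exact le_of_pow_le_pow_left₀ two_ne_zero (by linarith only [hd0]) h
  set s := σ d with hsdef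
  set A := s * α with hA
  set B := s * (T - α) with hB
  set w := d + γ / ν with hw
  have hTα : 0 < T - α := by linarith
  have hApos : 0 < A := mul_pos hsp hα0
  have hBpos : 0 < B := mul_pos hsp hTα
  have hγν : 0 ≤ γ / ν := by positivity
  have hwpos : 0 < w := by rw [hw]; linarith only [hdpos, hγν]
  have hwd : d ≤ w := by rw [hw]; linarith only [hγν]
  have hAB : A + B = s * T := by rw [hA, hB]; ring
  have hsT1 : 1 ≤ s * T := by
    have h1 : 1 ≤ d * T := by
      rw [div_le_iff₀ hT] at hdT; linarith only [hdT]
    have h2 : d * T ≤ s * T := mul_le_mul_of_nonneg_right hsd.le hT.le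
    linarith only [h1, h2]
  set Ca := Real.cosh A with hCa
  set Sa := Real.sinh A with hSa
  set Cb := Real.cosh B with hCb
  set Sb := Real.sinh B with hSb
  set CT := Real.cosh (s * T) with hCT
  set ST := Real.sinh (s * T) with hST
  have hCapos : 0 < Ca := Real.cosh_pos A
  have hCbpos : 0 < Cb := Real.cosh_pos B
  have hSapos : 0 < Sa := Real.sinh_pos_iff.2 hApos
  have hSbpos : 0 < Sb := Real.sinh_pos_iff.2 hBpos
  have hSTpos : 0 < ST := Real.sinh_pos_iff.2 (by linarith only [hsT1])
  have hSaCa : Sa < Ca := Real.sinh_lt_cosh A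
  have hSbCb : Sb < Cb := Real.sinh_lt_cosh B
  have hSTCT : ST < CT := Real.sinh_lt_cosh (s * T)
  have hCTsplit : CT = Ca * Cb + Sa * Sb := by
    rw [hCT, ← hAB, Real.cosh_add]
  have hCT2ST : CT ≤ 2 * ST := cosh_le_two_sinh_aux hsT1
  have hCaCbST : Ca * Cb ≤ 2 * ST := by
    linarith only [hCTsplit, hCT2ST, mul_pos hSapos hSbpos]
  have hNd : N d = s * CT + w * ST := by
    rw [hN d hd0, hω d hd0]
  have hNlb : (s + w) * ST ≤ N d := by
    rw [hNd]
    have h1 : s * ST ≤ s * CT := mul_le_mul_of_nonneg_left hSTCT.le hsp.le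
    have h2 : (s + w) * ST = s * ST + w * ST := by ring
    linarith only [h1, h2.le, h2.ge]
  have hswST : 0 < (s + w) * ST := mul_pos (by linarith only [hsp, hwpos]) hSTpos
  have hNpos : 0 < N d := lt_of_lt_of_le hswST hNlb
  set PP := (s * Sb + w * Cb) * (s * Ca + d * Sa) with hPP
  set QQ := (s * γ * Cb + (1 - γ * d) * Sb) * Ca with hQQ
  have hP1 : 0 < s * Sb + w * Cb :=
    add_pos (mul_pos hsp hSbpos) (mul_pos hwpos hCbpos)
  have hP2 : 0 < s * Ca + d * Sa :=
    add_pos (mul_pos hsp hCapos) (mul_pos hdpos hSapos)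
  have hPpos : 0 < PP := mul_pos hP1 hP2
  have hQ1 : 0 < s * γ * Cb + (1 - γ * d) * Sb := by
    have hg1 : d * Sb ≤ d * Cb := mul_le_mul_of_nonneg_left hSbCb.le hd0
    have hg2 : d * Cb ≤ s * Cb := mul_le_mul_of_nonneg_right hsd.le hCbpos.le
    have hg3 : 0 ≤ γ * (s * Cb - d * Sb) :=
      mul_nonneg hγ (by linarith only [hg1, hg2])
    have hg4 : s * γ * Cb + (1 - γ * d) * Sb = γ * (s * Cb - d * Sb) + Sb := by ring
    linarith only [hg3, hg4.ge, hSbpos]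
  have hQpos : 0 < QQ := mul_pos hQ1 hCapos
  have hEd : E d = N d / PP := by
    rw [hE d hd0, hω d hd0, ha d hd0, hb d hd0]
  have hFd : F d = N d / QQ := by
    rw [hF d hd0, hβ d hd0, ha d hd0, hb d hd0]
  have hkey : QQ - ν * PP = -(ν * d * N d) := by
    have h := key d hd0
    rw [hω d hd0, hβ d hd0, ha d hd0, hb d hd0, ← hsdef, ← hA, ← hB,
      ← hCa, ← hSa, ← hCb, ← hSb, ← hw] at h
    rw [hPP, hQQ]
    linear_combination h
  have hEF : E d - ν * F d = N d * (QQ - ν * PP) / (PP * QQ) := by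
    rw [hEd, hFd]
    field_simp
  rw [hkey] at hEF
  show 1 + θ * ν / (8 * (2 * γ + 1)) * d ≤ 1 - θ * d * (E d - ν * F d)
  rw [hEF]
  have hrw : 1 - θ * d * (N d * -(ν * d * N d) / (PP * QQ))
      = 1 + θ * ν * d ^ 2 * (N d) ^ 2 / (PP * QQ) := by ring
  rw [hrw]
  have hPQpos : 0 < PP * QQ := mul_pos hPpos hQpos
  have hmain : PP * QQ ≤ 8 * (2 * γ + 1) * d * (N d) ^ 2 := by
    have hPub : PP ≤ ((s + w) * Cb) * ((s + d) * Ca) := by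
      have h1 : s * Sb + w * Cb ≤ (s + w) * Cb := by
        have := mul_le_mul_of_nonneg_left hSbCb.le hsp.le
        have he : (s + w) * Cb = s * Cb + w * Cb := by ring
        linarith only [this, he.ge]
      have h2 : s * Ca + d * Sa ≤ (s + d) * Ca := by
        have := mul_le_mul_of_nonneg_left hSaCa.le hd0
        have he : (s + d) * Ca = s * Ca + d * Ca := by ring
        linarith only [this, he.ge]
      exact mul_le_mul h1 h2 hP2.le
        (mul_nonneg (by linarith only [hsp, hwpos]) hCbpos.le)
    have hQub : QQ ≤ ((s * γ + 1) * Cb) * Ca := by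
      apply mul_le_mul_of_nonneg_right _ hCapos.le
      have h1 : (1 - γ * d) * Sb ≤ 1 * Sb :=
        mul_le_mul_of_nonneg_right
          (by linarith only [mul_nonneg hγ hd0]) hSbpos.le
      have h2 : s * γ * Sb ≤ s * γ * Cb := by
        exact mul_le_mul_of_nonneg_left hSbCb.le (mul_nonneg hsp.le hγ)
      have h3 : Sb ≤ Cb := hSbCb.le
      have he : (s * γ + 1) * Cb = s * γ * Cb + Cb := by ring
      linarith only [h1, h3, he.ge]
    have hsw0 : (0:ℝ) ≤ s + w := by linarith only [hsp, hwpos]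
    have hsγ1 : (0:ℝ) ≤ s * γ + 1 := by
      have := mul_nonneg hsp.le hγ; linarith only [this]
    calc PP * QQ ≤ (((s + w) * Cb) * ((s + d) * Ca)) * (((s * γ + 1) * Cb) * Ca) := by
          apply mul_le_mul hPub hQub hQpos.le
          exact mul_nonneg (mul_nonneg hsw0 hCbpos.le)
            (mul_nonneg (by linarith only [hsp, hd0]) hCapos.le)
      _ = ((s + w) * (s + d) * (s * γ + 1)) * ((Ca * Cb) * (Ca * Cb)) := by ring
      _ ≤ ((s + w) * (2 * s) * (d * (2 * γ + 1))) * ((2 * ST) * (2 * ST)) := by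
          apply mul_le_mul
          · apply mul_le_mul
            · apply mul_le_mul_of_nonneg_left (by linarith only [hsd]) hsw0
            · have hg1 : s * γ ≤ 2 * d * γ := mul_le_mul_of_nonneg_right hs2d hγ
              have he : d * (2 * γ + 1) = 2 * d * γ + d := by ring
              linarith only [hg1, hd1, he.ge]
            · exact hsγ1
            · exact mul_nonneg hsw0 (by linarith only [hsp])
          · exact mul_le_mul hCaCbST hCaCbST
              (mul_nonneg hCapos.le hCbpos.le) (by linarith only [hSTpos])
          · exact mul_nonneg (mul_nonneg hCapos.le hCbpos.le)
              (mul_nonneg hCapos.le hCbpos.le)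
          · exact mul_nonneg (mul_nonneg hsw0 (by linarith only [hsp]))
              (mul_nonneg hd0 (by linarith only [hγ]))
      _ = 8 * (2 * γ + 1) * d * ((s * (s + w)) * ST ^ 2) := by ring
      _ ≤ 8 * (2 * γ + 1) * d * (((s + w) * (s + w)) * ST ^ 2) := by
          apply mul_le_mul_of_nonneg_left _
            (by have := mul_nonneg hγ hd0; linarith only [hγ, hd0, this,
              mul_nonneg (by linarith only [hγ] : (0:ℝ) ≤ 2 * γ + 1) hd0])
          apply mul_le_mul_of_nonneg_right _ (sq_nonneg ST)
          exact mul_le_mul_of_nonneg_right (by linarith only [hwpos]) hsw0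
      _ = 8 * (2 * γ + 1) * d * ((s + w) * ST) ^ 2 := by ring
      _ ≤ 8 * (2 * γ + 1) * d * (N d) ^ 2 := by
          apply mul_le_mul_of_nonneg_left _
            (mul_nonneg (mul_nonneg (by norm_num)
              (by linarith only [hγ])) hd0)
          exact pow_le_pow_left₀ hswST.le hNlb 2
  have hdiv : θ * ν / (8 * (2 * γ + 1)) * d ≤ θ * ν * d ^ 2 * (N d) ^ 2 / (PP * QQ) := by
    rw [div_mul_eq_mul_div, div_le_div_iff₀ (by positivity) hPQpos]
    have h := mul_le_mul_of_nonneg_left hmain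
      (by positivity : (0:ℝ) ≤ θ * ν * d)
    have he : θ * ν * d * (8 * (2 * γ + 1) * d * (N d) ^ 2)
        = θ * ν * d ^ 2 * (N d) ^ 2 * (8 * (2 * γ + 1)) := by ring
    linarith only [h, he.le, he.ge]
  linarith only [hdiv]
end

section
/- Fix reals ν > 0, γ ≥ 0, T > 0, 0 < α < T and θ ∈ ℝ. For d ≥ 0 define σ(d) = √(d² + 1/ν), ω(d) = d + γ/ν, a(d) = σ(d)·α, b(d) = σ(d)·(T − α), N(d) = σ(d)·cosh(σ(d)·T) + ω(d)·sinh(σ(d)·T), E(d) = N(d) / ((σ(d)·sinh(b(d)) + ω(d)·cosh(b(d)))·sinh(a(d))) and F(d) = N(d) / ((σ(d)·cosh(b(d)) + ω(d)·sinh(b(d)))·(σ(d)·sinh(a(d)) + d·cosh(a(d)))). Then: (i) with σ₀ = √(1/ν), one has E(0) + 0·F(0) = 1 + coth(σ₀·α)·(coth(σ₀·(T − α)) + γ·σ₀)/(1 + γ·σ₀·coth(σ₀·(T − α))); and (ii) E(d) → 2 and d·F(d) → 1 as d → ∞, so |1 − θ·(E(d) + d·F(d))| → |1 − 3·θ| as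 d → ∞ (Filter.Tendsto along atTop). -/
open Real Filter

private lemma cosh_eq'' (z : ℝ) : Real.cosh z = Real.exp z/2*(1+Real.exp (-(2*z))) := by
  rw [Real.cosh_eq, show -(2*z) = -z + -z by ring, Real.exp_add, Real.exp_neg]
  have := Real.exp_ne_zero z
  field_simp

private lemma sinh_eq'' (z : ℝ) : Real.sinh z = Real.exp z/2*(1-Real.exp (-(2*z))) := by
  rw [Real.sinh_eq, show -(2*z) = -z + -z by ring, Real.exp_add, Real.exp_neg]
  have := Real.exp_ne_zero z
  field_simp

private lemma quot2' (s A2 B2 C X Y : ℝ) (hs : s ≠ 0) (hX : X ≠ 0) (hY : Y ≠ 0)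
    (hB : B2 ≠ 0) (hC : C ≠ 0) :
    (X*Y/2*(s*A2))/((Y/2*(s*B2))*(X/2*C)) = 2*A2/(B2*C) := by
  field_simp

private lemma quot3' (d s A B C X Y : ℝ) (hd : d ≠ 0) (hs : s ≠ 0) (hX : X ≠ 0) (hY : Y ≠ 0)
    (hB : B ≠ 0) (hC : C ≠ 0) :
    d * ((X*Y/2*(s*A))/((Y/2*(s*B))*(X/2*(d*C)))) = 2*A/(B*C) := by
  field_simp

private lemma Eform' (s w x y : ℝ) (hs : 0 < s) (hw : 0 ≤ w) (hx : 0 < x) (hy : 0 < y) :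
    (s * Real.cosh (x+y) + w * Real.sinh (x+y)) /
      ((s * Real.sinh y + w * Real.cosh y) * Real.sinh x)
    = 2*((1 + Real.exp (-(2*(x+y)))) + (w/s)*(1 - Real.exp (-(2*(x+y))))) /
      (((1 - Real.exp (-(2*y))) + (w/s)*(1 + Real.exp (-(2*y)))) * (1 - Real.exp (-(2*x)))) := by
  set p := Real.exp (-(2*(x+y))) with hp
  set u := Real.exp (-(2*y)) with hu
  set v := Real.exp (-(2*x)) with hv
  have hexy : Real.exp (x+y) = Real.exp x * Real.exp y := Real.exp_add x y
  have hu1 : u < 1 := Real.exp_lt_one_iff.mpr (by nlinarith)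
  have hv1 : v < 1 := Real.exp_lt_one_iff.mpr (by nlinarith)
  have hu0 : 0 < u := Real.exp_pos _
  have hv0 : 0 < v := Real.exp_pos _
  have hB : ((1 - u) + (w/s)*(1 + u)) ≠ 0 := by
    have : 0 ≤ (w/s)*(1+u) := by positivity
    nlinarith
  have hC : (1 - v) ≠ 0 := by nlinarith
  have hNum : s * Real.cosh (x+y) + w * Real.sinh (x+y)
      = Real.exp x * Real.exp y/2*(s*((1+p) + (w/s)*(1-p))) := by
    rw [cosh_eq'', sinh_eq'', hexy, ← hp]
    field_simp
  have hDen : s * Real.sinh y + w * Real.cosh y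
      = Real.exp y/2*(s*((1-u) + (w/s)*(1+u))) := by
    rw [cosh_eq'', sinh_eq'', ← hu]
    field_simp
  have hSa : Real.sinh x = Real.exp x/2*(1-v) := by rw [sinh_eq'', ← hv]
  rw [hNum, hDen, hSa,
    quot2' _ _ _ _ _ _ hs.ne' (Real.exp_ne_zero x) (Real.exp_ne_zero y) hB hC]

private lemma Fform' (d s w x y : ℝ) (hd : 0 < d) (hs : 0 < s) (hw : 0 ≤ w) (hx : 0 < x)
    (hy : 0 < y) :
    d * ((s * Real.cosh (x+y) + w * Real.sinh (x+y)) /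
      ((s * Real.cosh y + w * Real.sinh y) * (s * Real.sinh x + d * Real.cosh x)))
    = 2*((1 + Real.exp (-(2*(x+y)))) + (w/s)*(1 - Real.exp (-(2*(x+y))))) /
      (((1 + Real.exp (-(2*y))) + (w/s)*(1 - Real.exp (-(2*y)))) *
        ((s/d)*(1 - Real.exp (-(2*x))) + (1 + Real.exp (-(2*x))))) := by
  set p := Real.exp (-(2*(x+y))) with hp
  set u := Real.exp (-(2*y)) with hu
  set v := Real.exp (-(2*x)) with hv
  have hexy : Real.exp (x+y) = Real.exp x * Real.exp y := Real.exp_add x y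
  have hu1 : u < 1 := Real.exp_lt_one_iff.mpr (by nlinarith)
  have hv1 : v < 1 := Real.exp_lt_one_iff.mpr (by nlinarith)
  have hu0 : 0 < u := Real.exp_pos _
  have hv0 : 0 < v := Real.exp_pos _
  have hB : ((1 + u) + (w/s)*(1 - u)) ≠ 0 := by
    have : 0 ≤ (w/s)*(1-u) := mul_nonneg (by positivity) (by linarith)
    nlinarith
  have hC : ((s/d)*(1 - v) + (1 + v)) ≠ 0 := by
    have : 0 ≤ (s/d)*(1-v) := mul_nonneg (by positivity) (by linarith)
    nlinarith
  have hNum : s * Real.cosh (x+y) + w * Real.sinh (x+y)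
      = Real.exp x * Real.exp y/2*(s*((1+p) + (w/s)*(1-p))) := by
    rw [cosh_eq'', sinh_eq'', hexy, ← hp]
    field_simp
  have hDen : s * Real.cosh y + w * Real.sinh y
      = Real.exp y/2*(s*((1+u) + (w/s)*(1-u))) := by
    rw [cosh_eq'', sinh_eq'', ← hu]
    field_simp
  have hSa : s * Real.sinh x + d * Real.cosh x
      = Real.exp x/2*(d*((s/d)*(1-v) + (1+v))) := by
    rw [cosh_eq'', sinh_eq'', ← hv]
    field_simp
  rw [hNum, hDen, hSa,
    quot3' _ _ _ _ _ _ _ hd.ne' hs.ne' (Real.exp_ne_zero x) (Real.exp_ne_zero y) hB hC]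

set_option maxHeartbeats 3000000

/-- Algorithm NN₂ᶜ: (i) explicit value of the convergence quantity at the zero
eigenvalue (with `coth x = cosh x / sinh x`); (ii) high-frequency behavior
`E(d) → 2`, `d·F(d) → 1`, hence `|1 − θ(E(d) + d·F(d))| → |1 − 3θ|`. -/
theorem stmt19 (ν γ T α θ : ℝ) (hν : 0 < ν) (hγ : 0 ≤ γ) (hT : 0 < T)
    (hα0 : 0 < α) (hαT : α < T)
    (σ ω a b N E F : ℝ → ℝ)
    (hσ : ∀ d, 0 ≤ d → σ d = Real.sqrt (d ^ 2 + 1 / ν))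
    (hω : ∀ d, 0 ≤ d → ω d = d + γ / ν)
    (ha : ∀ d, 0 ≤ d → a d = σ d * α)
    (hb : ∀ d, 0 ≤ d → b d = σ d * (T - α))
    (hN : ∀ d, 0 ≤ d → N d = σ d * Real.cosh (σ d * T) + ω d * Real.sinh (σ d * T))
    (hE : ∀ d, 0 ≤ d → E d = N d /
      ((σ d * Real.sinh (b d) + ω d * Real.cosh (b d)) * Real.sinh (a d)))
    (hF : ∀ d, 0 ≤ d → F d = N d /
      ((σ d * Real.cosh (b d) + ω d * Real.sinh (b d)) *
        (σ d * Real.sinh (a d) + d * Real.cosh (a d)))) :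
    (E 0 + 0 * F 0 = 1
      + (Real.cosh (Real.sqrt (1 / ν) * α) / Real.sinh (Real.sqrt (1 / ν) * α)) *
        ((Real.cosh (Real.sqrt (1 / ν) * (T - α)) / Real.sinh (Real.sqrt (1 / ν) * (T - α))
            + γ * Real.sqrt (1 / ν)) /
          (1 + γ * Real.sqrt (1 / ν) *
            (Real.cosh (Real.sqrt (1 / ν) * (T - α)) / Real.sinh (Real.sqrt (1 / ν) * (T - α)))))) ∧
    Tendsto E atTop (nhds 2) ∧
    Tendsto (fun d => d * F d) atTop (nhds 1) ∧
    Tendsto (fun d => |1 - θ * (E d + d * F d)|) atTop (nhds |1 - 3 * θ|) := by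
  have hTA : 0 < T - α := by linarith
  -- Part (i)
  have hpart1 : E 0 + 0 * F 0 = 1
      + (Real.cosh (Real.sqrt (1 / ν) * α) / Real.sinh (Real.sqrt (1 / ν) * α)) *
        ((Real.cosh (Real.sqrt (1 / ν) * (T - α)) / Real.sinh (Real.sqrt (1 / ν) * (T - α))
            + γ * Real.sqrt (1 / ν)) /
          (1 + γ * Real.sqrt (1 / ν) *
            (Real.cosh (Real.sqrt (1 / ν) * (T - α)) / Real.sinh (Real.sqrt (1 / ν) * (T - α))))) := by
    set S := Real.sqrt (1/ν) with hSdef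
    have h00 : σ 0 = S := by
      rw [hσ 0 le_rfl, show (0:ℝ)^2 + 1/ν = 1/ν by norm_num]
    have hS : 0 < S := Real.sqrt_pos.mpr (by positivity)
    have hS2 : S^2 = 1/ν := Real.sq_sqrt (by positivity)
    have hk : γ/ν = γ * S^2 := by rw [hS2]; ring
    have hsa : 0 < Real.sinh (S*α) := Real.sinh_pos_iff.mpr (by positivity)
    have hsb : 0 < Real.sinh (S*(T-α)) := Real.sinh_pos_iff.mpr (mul_pos hS hTA)
    have hca : 0 < Real.cosh (S*α) := Real.cosh_pos _
    have hcb : 0 < Real.cosh (S*(T-α)) := Real.cosh_pos _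
    have hD1 : 0 < S * Real.sinh (S*(T-α)) + (γ/ν) * Real.cosh (S*(T-α)) := by positivity
    have hD2 : 0 < 1 + γ*S*(Real.cosh (S*(T-α))/Real.sinh (S*(T-α))) := by positivity
    rw [hE 0 le_rfl, hN 0 le_rfl, ha 0 le_rfl, hb 0 le_rfl, hω 0 le_rfl, h00, zero_add,
      zero_mul, add_zero,
      show S*T = S*α + S*(T-α) by ring, Real.cosh_add, Real.sinh_add, hk]
    field_simp
    ring
  -- Part (ii): limit infrastructure
  set c := 1/ν with hc
  have hc0 : 0 < c := by positivity
  set s' : ℝ → ℝ := fun d => Real.sqrt (d^2 + c) with hs'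
  have hspos : ∀ d, 0 < s' d := fun d => Real.sqrt_pos.mpr (by positivity)
  have hstop : Tendsto s' atTop atTop := by
    apply tendsto_atTop_mono' atTop ?_ tendsto_id
    filter_upwards [eventually_ge_atTop (0:ℝ)] with d hd
    calc d = Real.sqrt (d^2) := (Real.sqrt_sq hd).symm
    _ ≤ s' d := Real.sqrt_le_sqrt (by nlinarith)
  have hq : Tendsto (fun d => s' d / d) atTop (nhds 1) := by
    have h2 : Tendsto (fun d : ℝ => 1 + c/d^2) atTop (nhds 1) := by
      have := (tendsto_pow_atTop (two_ne_zero)).inv_tendsto_atTop.const_mul c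
      simpa [div_eq_mul_inv] using tendsto_const_nhds.add this
    have h1 : Tendsto (fun d : ℝ => Real.sqrt (1 + c/d^2)) atTop (nhds 1) := by
      have := (Real.continuous_sqrt.tendsto 1).comp h2
      rwa [Real.sqrt_one] at this
    apply h1.congr'
    filter_upwards [eventually_gt_atTop (0:ℝ)] with d hd
    rw [eq_div_iff hd.ne', show (1:ℝ) + c/d^2 = (d^2+c)/d^2 by field_simp,
      Real.sqrt_div (by positivity) (d^2), Real.sqrt_sq hd.le]
    field_simp
    rfl
  have hq' : Tendsto (fun d => d / s' d) atTop (nhds 1) := by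
    have := hq.inv₀ one_ne_zero
    simp only [inv_div, inv_one] at this
    exact this
  have hr : Tendsto (fun d => (d + γ/ν) / s' d) atTop (nhds 1) := by
    have h0 : Tendsto (fun d => (γ/ν) * (s' d)⁻¹) atTop (nhds ((γ/ν) * 0)) :=
      hstop.inv_tendsto_atTop.const_mul _
    rw [mul_zero] at h0
    have h1 := hq'.add h0
    rw [add_zero] at h1
    exact h1.congr fun d => by rw [← div_eq_mul_inv, ← add_div]
  have hexp : ∀ m : ℝ, 0 < m → Tendsto (fun d => Real.exp (-(2*(s' d * m)))) atTop (nhds 0) := by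
    intro m hm
    apply Real.tendsto_exp_atBot.comp
    apply tendsto_neg_atTop_atBot.comp
    exact ((hstop.atTop_mul_const hm).const_mul_atTop two_pos)
  have hP : Tendsto (fun d => Real.exp (-(2*(s' d*α + s' d*(T-α))))) atTop (nhds 0) :=
    (hexp T hT).congr (fun d => by ring_nf)
  have hU := hexp (T-α) hTA
  have hV := hexp α hα0
  -- E limit
  have h2 : Tendsto E atTop (nhds 2) := by
    have hEeq : E =ᶠ[atTop] fun d =>
        2*((1 + Real.exp (-(2*(s' d*α + s' d*(T-α)))))
            + ((d+γ/ν)/s' d)*(1 - Real.exp (-(2*(s' d*α + s' d*(T-α)))))) /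
          (((1 - Real.exp (-(2*(s' d*(T-α)))))
              + ((d+γ/ν)/s' d)*(1 + Real.exp (-(2*(s' d*(T-α)))))) *
            (1 - Real.exp (-(2*(s' d*α))))) := by
      filter_upwards [eventually_ge_atTop (0:ℝ)] with d hd
      rw [hE d hd, hN d hd, ha d hd, hb d hd, hω d hd, hσ d hd,
        show Real.sqrt (d^2+1/ν) * T = Real.sqrt (d^2+1/ν)*α + Real.sqrt (d^2+1/ν)*(T-α)
          by ring]
      exact Eform' (Real.sqrt (d^2+1/ν)) (d+γ/ν) _ _
        (Real.sqrt_pos.mpr (by positivity)) (add_nonneg hd (by positivity))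
        (mul_pos (Real.sqrt_pos.mpr (by positivity)) hα0)
        (mul_pos (Real.sqrt_pos.mpr (by positivity)) hTA)
    have hnum : Tendsto (fun d =>
        2*((1 + Real.exp (-(2*(s' d*α + s' d*(T-α)))))
            + ((d+γ/ν)/s' d)*(1 - Real.exp (-(2*(s' d*α + s' d*(T-α))))))) atTop
        (nhds (2*((1+0)+1*(1-0)))) :=
      tendsto_const_nhds.mul ((tendsto_const_nhds.add hP).add
        (hr.mul (tendsto_const_nhds.sub hP)))
    have hden : Tendsto (fun d =>
        ((1 - Real.exp (-(2*(s' d*(T-α)))))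
            + ((d+γ/ν)/s' d)*(1 + Real.exp (-(2*(s' d*(T-α)))))) *
          (1 - Real.exp (-(2*(s' d*α))))) atTop
        (nhds (((1-0)+1*(1+0))*(1-0))) :=
      ((tendsto_const_nhds.sub hU).add (hr.mul (tendsto_const_nhds.add hU))).mul
        (tendsto_const_nhds.sub hV)
    have hdiv := hnum.div hden (by norm_num)
    have h2' : Tendsto E atTop (nhds (2*((1+0)+1*(1-0))/(((1-0)+1*(1+0))*(1-0)))) :=
      hdiv.congr' hEeq.symm
    convert h2' using 2
    norm_num
  -- d·F limit
  have h3 : Tendsto (fun d => d * F d) atTop (nhds 1) := by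
    have hFeq : (fun d => d * F d) =ᶠ[atTop] fun d =>
        2*((1 + Real.exp (-(2*(s' d*α + s' d*(T-α)))))
            + ((d+γ/ν)/s' d)*(1 - Real.exp (-(2*(s' d*α + s' d*(T-α)))))) /
          (((1 + Real.exp (-(2*(s' d*(T-α)))))
              + ((d+γ/ν)/s' d)*(1 - Real.exp (-(2*(s' d*(T-α)))))) *
            ((s' d/d)*(1 - Real.exp (-(2*(s' d*α)))) + (1 + Real.exp (-(2*(s' d*α)))))) := by
      filter_upwards [eventually_gt_atTop (0:ℝ)] with d hd
      rw [hF d hd.le, hN d hd.le, ha d hd.le, hb d hd.le, hω d hd.le, hσ d hd.le,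
        show Real.sqrt (d^2+1/ν) * T = Real.sqrt (d^2+1/ν)*α + Real.sqrt (d^2+1/ν)*(T-α)
          by ring]
      exact Fform' d (Real.sqrt (d^2+1/ν)) (d+γ/ν) _ _ hd
        (Real.sqrt_pos.mpr (by positivity)) (add_nonneg hd.le (by positivity))
        (mul_pos (Real.sqrt_pos.mpr (by positivity)) hα0)
        (mul_pos (Real.sqrt_pos.mpr (by positivity)) hTA)
    have hnum : Tendsto (fun d =>
        2*((1 + Real.exp (-(2*(s' d*α + s' d*(T-α)))))
            + ((d+γ/ν)/s' d)*(1 - Real.exp (-(2*(s' d*α + s' d*(T-α))))))) atTop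
        (nhds (2*((1+0)+1*(1-0)))) :=
      tendsto_const_nhds.mul ((tendsto_const_nhds.add hP).add
        (hr.mul (tendsto_const_nhds.sub hP)))
    have hden : Tendsto (fun d =>
        ((1 + Real.exp (-(2*(s' d*(T-α)))))
            + ((d+γ/ν)/s' d)*(1 - Real.exp (-(2*(s' d*(T-α)))))) *
          ((s' d/d)*(1 - Real.exp (-(2*(s' d*α)))) + (1 + Real.exp (-(2*(s' d*α)))))) atTop
        (nhds (((1+0)+1*(1-0))*(1*(1-0)+(1+0)))) :=
      ((tendsto_const_nhds.add hU).add (hr.mul (tendsto_const_nhds.sub hU))).mul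
        ((hq.mul (tendsto_const_nhds.sub hV)).add (tendsto_const_nhds.add hV))
    have hdiv := hnum.div hden (by norm_num)
    have h3' : Tendsto (fun d => d * F d) atTop
        (nhds (2*((1+0)+1*(1-0))/(((1+0)+1*(1-0))*(1*(1-0)+(1+0))))) :=
      hdiv.congr' hFeq.symm
    convert h3' using 2
    norm_num
  refine ⟨hpart1, h2, h3, ?_⟩
  have hsum := h2.add h3
  have habs : Tendsto (fun d => |1 - θ*(E d + d*F d)|) atTop (nhds |1 - θ*(2+1)|) :=
    ((tendsto_const_nhds (x := (1:ℝ))).sub (hsum.const_mul θ)).abs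
  have heq : |(1:ℝ) - 3*θ| = |1 - θ*(2+1)| := by ring_nf
  rw [heq]
  exact habs
end
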